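/- arXiv:2605.27733 — 5 statements merged into one kernel-verified Lean document; each statement's English description precedes it below -/
import Mathlib

section
/- For a Cauchy random variable H with location 0 and scale γ > 0 and any a > 0, the truncated second moment satisfies E[min{H², a²}] ≤ 4γa/π. -/
open Real MeasureTheory

open Set

/-- Density of the Cauchy distribution with location 0 and scale `γ`. -/
noncomputable def cauchyPDF (γ x : ℝ) : ℝ := γ / (π * (γ ^ 2 + x ^ 2))

/-- For `H ~ Cauchy(0, γ)` with `γ > 0` and any `a > 0`, the truncated second moment
satisfies `E[min{H², a²}] ≤ 4γa/π`. -/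
theorem cauchy_truncated_second_moment (γ a : ℝ) (hγ : 0 < γ) (ha : 0 < a) :
    (∫ x, min (x ^ 2) (a ^ 2) * cauchyPDF γ x) ≤ 4 * γ * a / π := by
  have hπ : (0:ℝ) < π := pi_pos
  set f : ℝ → ℝ := fun t => if t ≤ a then 1 else a ^ 2 / t ^ 2 with hf
  set F : ℝ → ℝ := fun x => if |x| ≤ a then 1 else a ^ 2 / x ^ 2 with hF
  have hFf : ∀ x, F x = f |x| := by
    intro x
    simp only [hF, hf, sq_abs]
  have hfm : Measurable f :=
    Measurable.ite (measurableSet_le measurable_id measurable_const)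
      measurable_const (measurable_const.div (measurable_id.pow_const 2))
  have hFm : Measurable F := by
    have : F = f ∘ (fun x => |x|) := funext hFf
    rw [this]; exact hfm.comp measurable_abs
  -- integrability of F via domination
  have hg0 : Integrable (fun x : ℝ => (a ^ 2 + x ^ 2)⁻¹) := by
    have h2 : (fun x : ℝ => (a ^ 2 + x ^ 2)⁻¹)
        = fun x : ℝ => a⁻¹ ^ 2 * (1 + (x / a) ^ 2)⁻¹ := by
      funext x
      have hxa : (1:ℝ) + (x / a) ^ 2 = (a ^ 2 + x ^ 2) / a ^ 2 := by
        field_simp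
      rw [hxa, inv_div, inv_pow, div_eq_mul_inv, mul_comm]
      field_simp
    rw [h2]
    exact (integrable_inv_one_add_sq.comp_div ha.ne').const_mul _
  have hg : Integrable (fun x : ℝ => 2 * a ^ 2 * (a ^ 2 + x ^ 2)⁻¹) :=
    hg0.const_mul _
  have hFnonneg : ∀ x, 0 ≤ F x := by
    intro x
    simp only [hF]
    split <;> positivity
  have hFle : ∀ x, F x ≤ 2 * a ^ 2 * (a ^ 2 + x ^ 2)⁻¹ := by
    intro x
    have hpos : (0:ℝ) < a ^ 2 + x ^ 2 := by positivity
    simp only [hF]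
    rw [← div_eq_mul_inv]
    by_cases h : |x| ≤ a
    · rw [if_pos h, le_div_iff₀ hpos, one_mul]
      nlinarith [sq_abs x, abs_nonneg x]
    · rw [if_neg h]
      push_neg at h
      have hx2 : a ^ 2 < x ^ 2 := by nlinarith [sq_abs x, abs_nonneg x]
      have hx0 : (0:ℝ) < x ^ 2 := (by positivity : (0:ℝ) < a ^ 2).trans hx2
      rw [div_le_div_iff₀ hx0 hpos]
      nlinarith
  have hFint : Integrable F := by
    refine hg.mono' hFm.aestronglyMeasurable ?_
    filter_upwards with x
    rw [Real.norm_eq_abs, abs_of_nonneg (hFnonneg x)]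
    exact hFle x
  -- integrability on pieces
  have iIoc : IntegrableOn f (Ioc 0 a) := by
    have hc : IntegrableOn (fun _ : ℝ => (1:ℝ)) (Ioc 0 a) :=
      integrableOn_const measure_Ioc_lt_top.ne
    exact hc.congr_fun (fun x hx => by simp [hf, hx.2]) measurableSet_Ioc
  have hrw : ∀ x ∈ Ioi a, a ^ 2 * x ^ (-2:ℝ) = f x := by
    intro x hx
    have hx0 : 0 < x := ha.trans hx
    simp only [hf, if_neg (not_le.mpr (show a < x from hx))]
    rw [rpow_neg hx0.le, ← rpow_natCast x 2]
    norm_num [div_eq_mul_inv]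
  have iIoi : IntegrableOn f (Ioi a) := by
    have hb : IntegrableOn (fun x : ℝ => a ^ 2 * x ^ (-2:ℝ)) (Ioi a) :=
      (integrableOn_Ioi_rpow_of_lt (by norm_num : (-2:ℝ) < -1) ha).const_mul _
    exact hb.congr_fun hrw measurableSet_Ioi
  have hIoc : ∫ x in Ioc 0 a, f x = a := by
    rw [setIntegral_congr_fun measurableSet_Ioc (g := fun _ => (1:ℝ))
      (fun x hx => by simp [hf, hx.2])]
    simp [Real.volume_Ioc, ha.le]
  have hIoi : ∫ x in Ioi a, f x = a := by
    rw [← setIntegral_congr_fun measurableSet_Ioi hrw, integral_const_mul,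
      integral_Ioi_rpow_of_lt (by norm_num) ha]
    norm_num [rpow_neg_one]
    field_simp
  have hFint4 : ∫ x, F x = 4 * a := by
    calc ∫ x, F x = ∫ x, f |x| := by simp_rw [hFf]
    _ = 2 * ∫ x in Ioi (0:ℝ), f x := integral_comp_abs
    _ = 2 * ∫ x in Ioc 0 a ∪ Ioi a, f x := by rw [Ioc_union_Ioi_eq_Ioi ha.le]
    _ = 2 * ((∫ x in Ioc 0 a, f x) + ∫ x in Ioi a, f x) := by
        rw [setIntegral_union (Ioc_disjoint_Ioi le_rfl) measurableSet_Ioi iIoc iIoi]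
    _ = 4 * a := by rw [hIoc, hIoi]; ring
  -- main comparison
  have key : (∫ x, min (x ^ 2) (a ^ 2) * cauchyPDF γ x) ≤ ∫ x, γ / π * F x := by
    refine integral_mono_of_nonneg ?_ (hFint.const_mul _) ?_
    · filter_upwards with x
      have h0 : 0 ≤ min (x ^ 2) (a ^ 2) := le_min (sq_nonneg x) (sq_nonneg a)
      have h1 : 0 ≤ cauchyPDF γ x := by unfold cauchyPDF; positivity
      positivity
    · filter_upwards with x
      have hd : (0:ℝ) < γ ^ 2 + x ^ 2 := by positivity
      have heq : min (x ^ 2) (a ^ 2) * cauchyPDF γ x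
          = γ / π * (min (x ^ 2) (a ^ 2) / (γ ^ 2 + x ^ 2)) := by
        unfold cauchyPDF
        field_simp
      rw [heq]
      refine mul_le_mul_of_nonneg_left ?_ (by positivity)
      simp only [hF]
      by_cases h : |x| ≤ a
      · rw [if_pos h, div_le_one hd]
        exact (min_le_left _ _).trans (by nlinarith)
      · rw [if_neg h]
        push_neg at h
        have hx2 : a ^ 2 < x ^ 2 := by nlinarith [sq_abs x, abs_nonneg x]
        have hx0 : (0:ℝ) < x ^ 2 := (by positivity : (0:ℝ) < a ^ 2).trans hx2
        exact div_le_div₀ (sq_nonneg a) (min_le_right _ _) hx0 (by nlinarith)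
  calc (∫ x, min (x ^ 2) (a ^ 2) * cauchyPDF γ x) ≤ ∫ x, γ / π * F x := key
  _ = γ / π * (4 * a) := by rw [integral_const_mul, hFint4]
  _ = 4 * γ * a / π := by ring
end

section
/- If H ~ Cauchy(0, γ), then 1 − E[e^{−|H|/c}(1 − |H|/c)] ≤ (8γ/(πc))·log(e + c/γ). -/
open Real MeasureTheory

open Set


lemma cauchyPDF_eq {γ : ℝ} (hγ : 0 < γ) (u : ℝ) :
    cauchyPDF γ u = (π * γ)⁻¹ * (1 + (u / γ) ^ 2)⁻¹ := by
  have hπ := Real.pi_pos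
  have h : (0:ℝ) < γ ^ 2 + u ^ 2 := by positivity
  unfold cauchyPDF
  field_simp

lemma cauchyPDF_nonneg {γ : ℝ} (hγ : 0 < γ) (u : ℝ) : 0 ≤ cauchyPDF γ u := by
  have hπ := Real.pi_pos
  unfold cauchyPDF; positivity

lemma integrable_cauchyPDF {γ : ℝ} (hγ : 0 < γ) : Integrable (cauchyPDF γ) := by
  have h1 : Integrable (fun u : ℝ => (π * γ)⁻¹ * (1 + (u / γ) ^ 2)⁻¹) :=
    (integrable_inv_one_add_sq.comp_div hγ.ne').const_mul _
  exact h1.congr (by filter_upwards with u; rw [cauchyPDF_eq hγ])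

lemma cauchyPDF_le_inv_sq {γ : ℝ} (hγ : 0 < γ) {t : ℝ} (ht0 : 0 < t) :
    cauchyPDF γ t ≤ (γ / π) * (t ^ 2)⁻¹ := by
  have hπ := Real.pi_pos
  have e3 : (γ / π) * (t ^ 2)⁻¹ = γ / (π * t ^ 2) := by ring
  rw [e3]
  unfold cauchyPDF
  gcongr
  nlinarith

lemma integral_cauchyPDF {γ : ℝ} (hγ : 0 < γ) : ∫ u, cauchyPDF γ u = 1 := by
  have hπ := Real.pi_pos
  calc ∫ u, cauchyPDF γ u = ∫ u, (π * γ)⁻¹ * (1 + (u / γ) ^ 2)⁻¹ := by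
        congr 1; ext u; exact cauchyPDF_eq hγ u
    _ = (π * γ)⁻¹ * ∫ u, (1 + (u / γ) ^ 2)⁻¹ := integral_const_mul _ _
    _ = (π * γ)⁻¹ * (|γ| • ∫ x : ℝ, (1 + x ^ 2)⁻¹) := by
        rw [Measure.integral_comp_div (fun x : ℝ => (1 + x ^ 2)⁻¹) γ]
    _ = 1 := by
        rw [integral_univ_inv_one_add_sq, abs_of_pos hγ, smul_eq_mul]
        field_simp

set_option maxHeartbeats 1000000 in
lemma bound_integral {γ c : ℝ} (hγ : 0 < γ) (hc : 0 < c) :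
    ∫ u, 2 * min (|u| / c) 1 * cauchyPDF γ u
      ≤ (8 * γ / (π * c)) * Real.log (Real.exp 1 + c / γ) := by
  have hπ := Real.pi_pos
  set f : ℝ → ℝ := fun t => 2 * min (|t| / c) 1 * cauchyPDF γ t with hfdef
  set L := Real.log (Real.exp 1 + c / γ) with hLdef
  have hx : (0:ℝ) ≤ c / γ := by positivity
  have hex : (0:ℝ) < Real.exp 1 + c / γ := by positivity
  have hL1 : 1 ≤ L := by
    rw [hLdef, Real.le_log_iff_exp_le hex]
    linarith
  have hmeas : AEStronglyMeasurable (fun t : ℝ => 2 * min (|t| / c) 1) volume :=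
    (continuous_const.mul ((continuous_abs.div_const c).min continuous_const)).aestronglyMeasurable
  have hf : Integrable f := by
    refine (integrable_cauchyPDF hγ).bdd_mul hmeas (c := 2) (ae_of_all _ fun t => ?_)
    have h0 : (0:ℝ) ≤ min (|t| / c) 1 := le_min (by positivity) zero_le_one
    have h1 : min (|t| / c) 1 ≤ 1 := min_le_right _ _
    rw [Real.norm_eq_abs, abs_of_nonneg (by linarith)]
    linarith
  have habs : ∀ u : ℝ, f |u| = f u := by
    intro u; simp only [hfdef, abs_abs, cauchyPDF, sq_abs]
  have hsplit : ∫ t in Ioi (0:ℝ), f t = (∫ t in Ioc 0 c, f t) + ∫ t in Ioi c, f t := by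
    rw [← setIntegral_union (Ioc_disjoint_Ioi le_rfl) measurableSet_Ioi
      hf.integrableOn hf.integrableOn, Ioc_union_Ioi_eq_Ioi hc.le]
  -- part 1
  have h1 : ∫ t in Ioc 0 c, f t ≤ (2 * γ / (π * c)) * L := by
    have e1 : ∫ t in Ioc 0 c, f t
        = ∫ t in (0:ℝ)..c, (2 * γ / (π * c)) * (t / (γ ^ 2 + t ^ 2)) := by
      rw [intervalIntegral.integral_of_le hc.le]
      refine setIntegral_congr_fun measurableSet_Ioc fun t ht => ?_
      obtain ⟨ht0, htc⟩ := ht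
      have hta : |t| = t := abs_of_pos ht0
      have hmin : min (|t| / c) 1 = t / c := by
        rw [hta, min_eq_left ((div_le_one hc).mpr htc)]
      have hden : (0:ℝ) < γ ^ 2 + t ^ 2 := by positivity
      simp only [hfdef, hmin, cauchyPDF]
      field_simp
    have hderiv : ∀ t ∈ uIcc (0:ℝ) c,
        HasDerivAt (fun s => (1/2) * Real.log (γ ^ 2 + s ^ 2)) (t / (γ ^ 2 + t ^ 2)) t := by
      intro t _
      have hden : (0:ℝ) < γ ^ 2 + t ^ 2 := by positivity
      have h := (((hasDerivAt_pow 2 t).const_add (γ ^ 2)).log hden.ne').const_mul (1/2 : ℝ)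
      convert h using 1
      · rfl
      · rfl
      · push_cast
        ring
    have hcont : Continuous fun t : ℝ => t / (γ ^ 2 + t ^ 2) := by
      refine continuous_id.div (by continuity) fun t => ?_
      positivity
    have e2 : ∫ t in (0:ℝ)..c, t / (γ ^ 2 + t ^ 2)
        = (1/2) * Real.log (γ ^ 2 + c ^ 2) - (1/2) * Real.log (γ ^ 2 + 0 ^ 2) :=
      intervalIntegral.integral_eq_sub_of_hasDerivAt hderiv (hcont.intervalIntegrable _ _)
    have hlog : (1/2) * Real.log (γ ^ 2 + c ^ 2) - (1/2) * Real.log (γ ^ 2 + 0 ^ 2) ≤ L := by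
      have hγ2 : (0:ℝ) < γ ^ 2 := by positivity
      have hd : Real.log (γ ^ 2 + c ^ 2) - Real.log (γ ^ 2)
          = Real.log ((γ ^ 2 + c ^ 2) / γ ^ 2) := (Real.log_div (by positivity) hγ2.ne').symm
      have hle : (γ ^ 2 + c ^ 2) / γ ^ 2 ≤ (Real.exp 1 + c / γ) ^ 2 := by
        rw [div_le_iff₀ hγ2]
        have he : (1:ℝ) ≤ Real.exp 1 := by linarith [Real.add_one_le_exp (1:ℝ)]
        have heq : (Real.exp 1 + c / γ) ^ 2 * γ ^ 2 = (Real.exp 1 * γ + c) ^ 2 := by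
          field_simp
        rw [heq]
        have t1 : 0 ≤ (Real.exp 1 ^ 2 - 1) * γ ^ 2 := mul_nonneg (by nlinarith) (sq_nonneg γ)
        have t2 : 0 ≤ 2 * Real.exp 1 * γ * c := by positivity
        nlinarith
      have h3 : Real.log ((γ ^ 2 + c ^ 2) / γ ^ 2) ≤ 2 * L := by
        calc Real.log ((γ ^ 2 + c ^ 2) / γ ^ 2)
            ≤ Real.log ((Real.exp 1 + c / γ) ^ 2) := Real.log_le_log (by positivity) hle
          _ = 2 * L := by rw [Real.log_pow, hLdef]; push_cast; ring
      have h02 : γ ^ 2 + (0:ℝ) ^ 2 = γ ^ 2 := by norm_num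
      rw [h02]
      linarith [hd, h3]
    rw [e1, intervalIntegral.integral_const_mul, e2]
    have hCpos : (0:ℝ) ≤ 2 * γ / (π * c) := by positivity
    exact mul_le_mul_of_nonneg_left hlog hCpos
  -- part 2
  have h2 : ∫ t in Ioi c, f t ≤ 2 * γ / (π * c) := by
    have hint2 : IntegrableOn (fun t : ℝ => (2 * γ / π) * t ^ (-2:ℝ)) (Ioi c) :=
      (integrableOn_Ioi_rpow_of_lt (by norm_num) hc).const_mul _
    have step : ∫ t in Ioi c, f t ≤ ∫ t in Ioi c, (2 * γ / π) * t ^ (-2:ℝ) := by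
      refine setIntegral_mono_on hf.integrableOn hint2 measurableSet_Ioi fun t ht => ?_
      have htc : c < t := ht
      have ht0 : 0 < t := hc.trans htc
      have hrp : t ^ (-2:ℝ) = (t ^ 2)⁻¹ := by
        rw [show (-2:ℝ) = -((2:ℕ):ℝ) by norm_num, Real.rpow_neg ht0.le, Real.rpow_natCast]
      have hmin : min (|t| / c) 1 ≤ 1 := min_le_right _ _
      have hmin0 : 0 ≤ min (|t| / c) 1 := le_min (by positivity) zero_le_one
      have hp : cauchyPDF γ t ≤ (γ / π) * (t ^ 2)⁻¹ := cauchyPDF_le_inv_sq hγ ht0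
      have hp0 := cauchyPDF_nonneg hγ t
      calc f t ≤ 2 * 1 * cauchyPDF γ t := by
            simp only [hfdef]
            exact mul_le_mul_of_nonneg_right (by linarith) hp0
        _ ≤ 2 * ((γ / π) * (t ^ 2)⁻¹) := by linarith
        _ = (2 * γ / π) * t ^ (-2:ℝ) := by rw [hrp]; ring
    have hval : ∫ t in Ioi c, (2 * γ / π) * t ^ (-2:ℝ) = 2 * γ / (π * c) := by
      rw [integral_const_mul, integral_Ioi_rpow_of_lt (by norm_num) hc]
      norm_num
      rw [Real.rpow_neg_one]
      field_simp
    linarith [step, hval.le, hval.ge]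
  -- assemble
  have hcomp : ∫ u, f u = 2 * ∫ t in Ioi (0:ℝ), f t := by
    rw [← integral_comp_abs (f := f)]
    congr 1; ext u; exact (habs u).symm
  have hC : (0:ℝ) ≤ 2 * γ / (π * c) := by positivity
  calc ∫ u, 2 * min (|u| / c) 1 * cauchyPDF γ u = ∫ u, f u := rfl
    _ = 2 * ((∫ t in Ioc 0 c, f t) + ∫ t in Ioi c, f t) := by rw [hcomp, hsplit]
    _ ≤ 2 * ((2 * γ / (π * c)) * L + (2 * γ / (π * c)) * L) := by nlinarith
    _ = (8 * γ / (π * c)) * L := by ring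

lemma key_nonneg {t : ℝ} (ht : 0 ≤ t) : Real.exp (-t) * (1 - t) ≤ 1 := by
  have h1 := Real.exp_pos (-t)
  have h2 : Real.exp (-t) ≤ 1 := Real.exp_le_one_iff.mpr (by linarith)
  nlinarith

lemma key_le {t : ℝ} (ht : 0 ≤ t) : 1 - Real.exp (-t) * (1 - t) ≤ 2 * min t 1 := by
  rcases le_total t 1 with h | h
  · rw [min_eq_left h]
    have h1 : 1 - t ≤ Real.exp (-t) := by
      have := Real.add_one_le_exp (-t); linarith
    nlinarith [Real.exp_pos (-t)]
  · rw [min_eq_right h]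
    have h1 : t + 1 ≤ Real.exp t := Real.add_one_le_exp t
    have h2 : Real.exp (-t) * Real.exp t = 1 := by
      rw [← Real.exp_add]; simp
    nlinarith [Real.exp_pos (-t), Real.exp_pos t]


/-- If `H ~ Cauchy(0, γ)`, then
`1 − E[e^{−|H|/c}(1 − |H|/c)] ≤ (8γ/(πc))·log(e + c/γ)`. -/
theorem cauchy_derivative_deficit (γ c : ℝ) (hγ : 0 < γ) (hc : 0 < c) :
    1 - ∫ u, Real.exp (-|u| / c) * (1 - |u| / c) * cauchyPDF γ u
      ≤ (8 * γ / (π * c)) * Real.log (Real.exp 1 + c / γ) := by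
  have hπ := Real.pi_pos
  have hcont : Continuous fun u : ℝ => Real.exp (-|u| / c) * (1 - |u| / c) :=
    (Real.continuous_exp.comp (continuous_abs.neg.div_const c)).mul
      (continuous_const.sub (continuous_abs.div_const c))
  have hub : ∀ u : ℝ, Real.exp (-|u| / c) * (1 - |u| / c) ≤ 1 := fun u => by
    rw [neg_div]; exact key_nonneg (by positivity)
  have hlb : ∀ u : ℝ, 1 - Real.exp (-|u| / c) * (1 - |u| / c) ≤ 2 * min (|u| / c) 1 := fun u => by
    rw [neg_div]; exact key_le (by positivity)
  have hmin0 : ∀ u : ℝ, (0:ℝ) ≤ min (|u| / c) 1 := fun u => le_min (by positivity) zero_le_one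
  have hmin1 : ∀ u : ℝ, min (|u| / c) 1 ≤ 1 := fun u => min_le_right _ _
  have hFint : Integrable (fun u => Real.exp (-|u| / c) * (1 - |u| / c) * cauchyPDF γ u) := by
    refine (integrable_cauchyPDF hγ).bdd_mul hcont.aestronglyMeasurable (c := 1) (ae_of_all _ fun u => ?_)
    rw [Real.norm_eq_abs, abs_le]
    exact ⟨by linarith [hlb u, hmin1 u], hub u⟩
  have hGint : Integrable (fun u => 2 * min (|u| / c) 1 * cauchyPDF γ u) := by
    refine (integrable_cauchyPDF hγ).bdd_mul
      ((continuous_const.mul ((continuous_abs.div_const c).min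
        continuous_const)).aestronglyMeasurable) (c := 2) (ae_of_all _ fun u => ?_)
    rw [Real.norm_eq_abs, abs_of_nonneg (by linarith [hmin0 u])]
    linarith [hmin1 u]
  have hsubint : Integrable
      (fun u => (1 - Real.exp (-|u| / c) * (1 - |u| / c)) * cauchyPDF γ u) := by
    refine ((integrable_cauchyPDF hγ).sub hFint).congr ?_
    filter_upwards with u
    simp only [Pi.sub_apply]
    ring
  have hs : 1 - ∫ u, Real.exp (-|u| / c) * (1 - |u| / c) * cauchyPDF γ u
      = ∫ u, (1 - Real.exp (-|u| / c) * (1 - |u| / c)) * cauchyPDF γ u := by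
    nth_rewrite 1 [show (1:ℝ) = ∫ u, cauchyPDF γ u from (integral_cauchyPDF hγ).symm]
    rw [← integral_sub (integrable_cauchyPDF hγ) hFint]
    congr 1; ext u; ring
  rw [hs]
  calc ∫ u, (1 - Real.exp (-|u| / c) * (1 - |u| / c)) * cauchyPDF γ u
      ≤ ∫ u, 2 * min (|u| / c) 1 * cauchyPDF γ u :=
        integral_mono hsubint hGint fun u =>
          mul_le_mul_of_nonneg_right (hlb u) (cauchyPDF_nonneg hγ u)
    _ ≤ (8 * γ / (π * c)) * Real.log (Real.exp 1 + c / γ) := bound_integral hγ hc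
end

section
/- Let S_c(x) = x·e^{−|x|/c} with c > 0, |g| ≤ B, and let ξ be a mixture noise (1−α)N(0,σ₀²) + α·Cauchy(0,γ₀) with σ₀ ≤ σ and 0 < γ₀ ≤ γ. Then Var(S_c(g + ξ)) ≤ (1−α)σ² + 8αγc/(πe). -/
open Real MeasureTheory ProbabilityTheory Set Filter
open scoped ENNReal NNReal

namespace SmoothShrinkAux

noncomputable def S (c x : ℝ) : ℝ := x * Real.exp (-|x| / c)

lemma hasDerivAt_S {c : ℝ} (hc : 0 < c) (x : ℝ) :
    HasDerivAt (S c) (Real.exp (-|x| / c) * (1 - |x| / c)) x := by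
  rcases lt_trichotomy x 0 with hx | hx | hx
  · have h1 : HasDerivAt (fun y : ℝ => y * Real.exp (y / c))
        (Real.exp (x / c) * (1 + x / c)) x := by
      have := (hasDerivAt_id x).mul ((hasDerivAt_id x).div_const c).exp
      refine this.congr_deriv ?_
      simp only [id_eq]
      ring_nf
    have h2 : (fun y : ℝ => y * Real.exp (y / c)) =ᶠ[nhds x] S c := by
      filter_upwards [eventually_lt_nhds hx] with y hy
      simp [S, abs_of_neg hy]
    have := h1.congr_of_eventuallyEq h2.symm
    refine this.congr_deriv ?_
    rw [abs_of_neg hx]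
    ring_nf
  · subst hx
    rw [hasDerivAt_iff_tendsto_slope]
    have h2 : slope (S c) 0 =ᶠ[nhdsWithin 0 {(0:ℝ)}ᶜ] fun y => Real.exp (-|y| / c) := by
      filter_upwards [self_mem_nhdsWithin] with y hy
      have hy' : y ≠ 0 := hy
      simp [slope, S, mul_div_assoc, mul_comm, hy']
    rw [tendsto_congr' h2]
    have : Tendsto (fun y : ℝ => Real.exp (-|y| / c)) (nhds 0) (nhds (Real.exp (-|(0:ℝ)| / c))) := by
      exact (Real.continuous_exp.comp ((continuous_abs.neg).div_const c)).tendsto 0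
    simp only [abs_zero, neg_zero, zero_div, Real.exp_zero] at this
    have hgoal : Real.exp (-|(0:ℝ)| / c) * (1 - |(0:ℝ)| / c) = 1 := by simp
    rw [hgoal]
    exact this.mono_left nhdsWithin_le_nhds
  · have h1 : HasDerivAt (fun y : ℝ => y * Real.exp (-y / c))
        (Real.exp (-x / c) * (1 - x / c)) x := by
      have := (hasDerivAt_id x).mul (((hasDerivAt_id x).neg).div_const c).exp
      refine this.congr_deriv ?_
      simp only [Pi.neg_apply, id_eq]
      ring_nf
    have h2 : (fun y : ℝ => y * Real.exp (-y / c)) =ᶠ[nhds x] S c := by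
      filter_upwards [eventually_gt_nhds hx] with y hy
      simp [S, abs_of_pos hy]
    have := h1.congr_of_eventuallyEq h2.symm
    refine this.congr_deriv ?_; rw [abs_of_pos hx]

lemma abs_deriv_S_le {c : ℝ} (hc : 0 < c) (x : ℝ) :
    |Real.exp (-|x| / c) * (1 - |x| / c)| ≤ 1 := by
  set t : ℝ := |x| / c with ht
  have ht0 : 0 ≤ t := div_nonneg (abs_nonneg x) hc.le
  have h1 : Real.exp (-t) ≤ 1 := Real.exp_le_one_iff.mpr (by linarith)
  have h2 : 0 < Real.exp (-t) := Real.exp_pos _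
  have hrw : -|x| / c = -t := by rw [ht]; ring
  rw [hrw, abs_mul, abs_of_pos h2]
  rcases le_total t 1 with h | h
  · rw [abs_of_nonneg (by linarith)]
    nlinarith
  · rw [abs_of_nonpos (by linarith)]
    have h3 : t + 1 ≤ Real.exp t := Real.add_one_le_exp t
    have h4 : Real.exp (-t) * Real.exp t = 1 := by
      rw [← Real.exp_add]; simp
    nlinarith

lemma lipschitz_S {c : ℝ} (hc : 0 < c) (u v : ℝ) : |S c u - S c v| ≤ |u - v| := by
  have hdiff : Differentiable ℝ (S c) := fun x => (hasDerivAt_S hc x).differentiableAt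
  have hlip : LipschitzWith 1 (S c) := by
    apply lipschitzWith_of_nnnorm_deriv_le hdiff
    intro x
    rw [(hasDerivAt_S hc x).deriv]
    rw [← NNReal.coe_le_coe, coe_nnnorm, Real.norm_eq_abs]
    simpa using abs_deriv_S_le hc x
  have := hlip.dist_le_mul u v
  simpa [Real.dist_eq] using this

lemma S_abs_le {c : ℝ} (hc : 0 < c) (x : ℝ) : |S c x| ≤ c / Real.exp 1 := by
  set t : ℝ := |x| / c with ht
  have ht0 : 0 ≤ t := div_nonneg (abs_nonneg x) hc.le
  have hxt : |x| = c * t := by rw [ht]; field_simp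
  have h2 : 0 < Real.exp (-t) := Real.exp_pos _
  have h3 : t - 1 + 1 ≤ Real.exp (t - 1) := Real.add_one_le_exp (t - 1)
  have h4 : Real.exp (t - 1) * Real.exp 1 = Real.exp t := by rw [← Real.exp_add]; ring_nf
  have h5 : Real.exp (-t) * Real.exp t = 1 := by rw [← Real.exp_add]; simp
  have he : 0 < Real.exp 1 := Real.exp_pos 1
  have h6 : t * Real.exp (-t) ≤ 1 / Real.exp 1 := by
    rw [le_div_iff₀ he]
    have hmul := mul_le_mul_of_nonneg_right h3 (mul_pos h2 he).le
    have hre : Real.exp (t - 1) * (Real.exp (-t) * Real.exp 1) = 1 := by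
      rw [← Real.exp_add, ← Real.exp_add]
      norm_num
    nlinarith
  have : |S c x| = |x| * Real.exp (-t) := by
    rw [S, abs_mul, Real.abs_exp, ht, neg_div]
  rw [this, hxt]
  calc c * t * Real.exp (-t) ≤ c * (1 / Real.exp 1) := by
        rw [mul_assoc]; exact mul_le_mul_of_nonneg_left h6 hc.le
    _ = c / Real.exp 1 := by ring

end SmoothShrinkAux

namespace SmoothShrinkAux

lemma cauchy_pdf_eq {γ₀ : ℝ} (hγ : 0 < γ₀) (x : ℝ) :
    γ₀ / (π * (γ₀ ^ 2 + x ^ 2)) = (π * γ₀)⁻¹ * (1 + (x * γ₀⁻¹) ^ 2)⁻¹ := by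
  have hπ := Real.pi_pos
  field_simp

lemma cauchy_integrable {γ₀ : ℝ} (hγ : 0 < γ₀) :
    Integrable (fun x : ℝ => γ₀ / (π * (γ₀ ^ 2 + x ^ 2))) := by
  have h1 : Integrable (fun x : ℝ => (1 + (x * γ₀⁻¹) ^ 2)⁻¹) :=
    integrable_inv_one_add_sq.comp_mul_right' (inv_ne_zero hγ.ne')
  have := h1.const_mul (π * γ₀)⁻¹
  exact this.congr (by filter_upwards with x; rw [cauchy_pdf_eq hγ])

lemma cauchy_integral_eq_one {γ₀ : ℝ} (hγ : 0 < γ₀) :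
    ∫ x : ℝ, γ₀ / (π * (γ₀ ^ 2 + x ^ 2)) = 1 := by
  have hπ := Real.pi_pos
  calc ∫ x : ℝ, γ₀ / (π * (γ₀ ^ 2 + x ^ 2))
      = ∫ x : ℝ, (π * γ₀)⁻¹ * (1 + (x * γ₀⁻¹) ^ 2)⁻¹ := by
        congr 1; funext x; rw [cauchy_pdf_eq hγ]
    _ = (π * γ₀)⁻¹ * ∫ x : ℝ, (1 + (x * γ₀⁻¹) ^ 2)⁻¹ := MeasureTheory.integral_const_mul _ _
    _ = (π * γ₀)⁻¹ * (|(γ₀⁻¹)⁻¹| • ∫ x : ℝ, (1 + x ^ 2)⁻¹) := by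
        rw [MeasureTheory.Measure.integral_comp_mul_right (fun u : ℝ => (1 + u ^ 2)⁻¹) γ₀⁻¹]
    _ = 1 := by
        rw [integral_univ_inv_one_add_sq, inv_inv, abs_of_pos hγ, smul_eq_mul]
        field_simp

end SmoothShrinkAux

namespace SmoothShrinkAux

/-- Dominating function for the Cauchy branch. -/
noncomputable def ψ (γ₀ M x : ℝ) : ℝ := γ₀ / π * (M ^ 2 / max (x ^ 2) (M ^ 2))

lemma ψ_cont {γ₀ M : ℝ} (hM : 0 < M) : Continuous (ψ γ₀ M) := by
  apply continuous_const.mul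
  apply continuous_const.div ((continuous_pow 2).max continuous_const)
  intro x
  exact ne_of_gt (lt_max_of_lt_right (by positivity))

lemma ψ_nonneg {γ₀ M : ℝ} (hγ : 0 < γ₀) (hM : 0 < M) (x : ℝ) : 0 ≤ ψ γ₀ M x := by
  have : (0:ℝ) < max (x ^ 2) (M ^ 2) := lt_max_of_lt_right (by positivity)
  unfold ψ
  positivity

lemma ψ_integrable {γ₀ M : ℝ} (hγ : 0 < γ₀) (hM : 0 < M) : Integrable (ψ γ₀ M) := by
  have hπ := Real.pi_pos
  have h1 : Integrable (fun x : ℝ => γ₀ / π * (2 * M ^ 2 + 2) * (1 + x ^ 2)⁻¹) :=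
    integrable_inv_one_add_sq.const_mul _
  apply h1.mono' ((ψ_cont hM).aestronglyMeasurable)
  filter_upwards with x
  rw [Real.norm_eq_abs, abs_of_nonneg (ψ_nonneg hγ hM x)]
  unfold ψ
  rw [mul_assoc]
  apply mul_le_mul_of_nonneg_left _ (by positivity)
  have hmax : (0:ℝ) < max (x ^ 2) (M ^ 2) := lt_max_of_lt_right (by positivity)
  rw [div_le_iff₀ hmax]
  have hinv : (1 + x ^ 2)⁻¹ * (1 + x ^ 2) = 1 := by
    field_simp
  rcases le_total (x ^ 2) (M ^ 2) with h | h
  · rw [max_eq_right h]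
    have key : M ^ 2 * (1 + x ^ 2) ≤ (2 * M ^ 2 + 2) * M ^ 2 := by nlinarith
    have h2 := mul_le_mul_of_nonneg_right key
      (inv_nonneg.mpr (by positivity : (0:ℝ) ≤ 1 + x ^ 2))
    nlinarith [hinv, h2]
  · rw [max_eq_left h]
    have key : M ^ 2 * (1 + x ^ 2) ≤ (2 * M ^ 2 + 2) * x ^ 2 := by nlinarith
    have h2 := mul_le_mul_of_nonneg_right key
      (inv_nonneg.mpr (by positivity : (0:ℝ) ≤ 1 + x ^ 2))
    nlinarith [hinv, h2]

lemma ψ_integral {γ₀ M : ℝ} (hγ : 0 < γ₀) (hM : 0 < M) :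
    ∫ x : ℝ, ψ γ₀ M x = 4 * γ₀ * M / π := by
  have hπ := Real.pi_pos
  have habs : ∀ x : ℝ, ψ γ₀ M |x| = ψ γ₀ M x := by
    intro x; unfold ψ; rw [sq_abs]
  have h2 : ∫ x : ℝ, ψ γ₀ M x = 2 * ∫ x in Ioi (0:ℝ), ψ γ₀ M x := by
    rw [← integral_comp_abs (f := ψ γ₀ M)]
    congr 1; funext x; rw [habs]
  -- split Ioi 0 = Ioc 0 M ∪ Ioi M
  have hsplit : ∫ x in Ioi (0:ℝ), ψ γ₀ M x
      = (∫ x in Ioc (0:ℝ) M, ψ γ₀ M x) + ∫ x in Ioi M, ψ γ₀ M x := by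
    rw [← setIntegral_union (Ioc_disjoint_Ioi le_rfl) measurableSet_Ioi
      ((ψ_integrable hγ hM).integrableOn) ((ψ_integrable hγ hM).integrableOn),
      Ioc_union_Ioi_eq_Ioi hM.le]
  have hpiece1 : ∫ x in Ioc (0:ℝ) M, ψ γ₀ M x = γ₀ * M / π := by
    rw [setIntegral_congr_fun measurableSet_Ioc
      (g := fun _ => γ₀ / π) ?_]
    · rw [setIntegral_const, Real.volume_real_Ioc_of_le hM.le, sub_zero, smul_eq_mul]
      ring
    · intro x hx
      have hx2 : x ^ 2 ≤ M ^ 2 := by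
        have h0 : 0 < x := hx.1
        have h1 : x ≤ M := hx.2
        nlinarith
      unfold ψ
      rw [max_eq_right hx2, div_self (by positivity), mul_one]
  have hpiece2 : ∫ x in Ioi M, ψ γ₀ M x = γ₀ * M / π := by
    have hcong : ∀ x ∈ Ioi M, ψ γ₀ M x = (γ₀ * M ^ 2 / π) * x ^ (-2 : ℝ) := by
      intro x hx
      have hx0 : (0:ℝ) < x := hM.trans hx
      have hx2 : M ^ 2 ≤ x ^ 2 := by nlinarith [le_of_lt (mem_Ioi.mp hx)]
      unfold ψ
      rw [max_eq_left hx2, Real.rpow_neg hx0.le,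
        show (2:ℝ) = ((2:ℕ):ℝ) by norm_num, Real.rpow_natCast]
      ring
    rw [setIntegral_congr_fun measurableSet_Ioi hcong, integral_const_mul,
      integral_Ioi_rpow_of_lt (by norm_num) hM]
    rw [show (-2 : ℝ) + 1 = -1 by norm_num, Real.rpow_neg_one]
    field_simp
  rw [h2, hsplit, hpiece1, hpiece2]
  ring

end SmoothShrinkAux

namespace SmoothShrinkAux

lemma integrable_sq_mul_exp {b : ℝ} (hb : 0 < b) :
    Integrable (fun x : ℝ => x ^ 2 * Real.exp (-b * x ^ 2)) := by
  have := integrable_rpow_mul_exp_neg_mul_sq hb (s := 2) (by norm_num)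
  rw [show (2:ℝ) = ((2:ℕ):ℝ) by norm_num] at this
  simpa [Real.rpow_natCast] using this

lemma integral_sq_mul_exp {b : ℝ} (hb : 0 < b) :
    ∫ x : ℝ, x ^ 2 * Real.exp (-b * x ^ 2) = Real.sqrt (π / b) / (2 * b) := by
  set F : ℝ → ℝ := fun x => -(x * Real.exp (-b * x ^ 2)) / (2 * b) with hF
  have hd : ∀ x ∈ Ici (0:ℝ), HasDerivAt F
      (x ^ 2 * Real.exp (-b * x ^ 2) - Real.exp (-b * x ^ 2) / (2 * b)) x := by
    intro x _
    have h1 : HasDerivAt (fun y : ℝ => y * Real.exp (-b * y ^ 2))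
        (Real.exp (-b * x ^ 2) + x * (Real.exp (-b * x ^ 2) * (-b * (2 * x)))) x := by
      have := (hasDerivAt_id x).mul (((hasDerivAt_pow 2 x).const_mul (-b)).exp)
      refine this.congr_deriv ?_
      simp only [id_eq]
      ring
    have h2 := (h1.neg).div_const (2 * b)
    refine h2.congr_deriv ?_
    field_simp
    ring
  have hint : IntegrableOn
      (fun x => x ^ 2 * Real.exp (-b * x ^ 2) - Real.exp (-b * x ^ 2) / (2 * b)) (Ioi 0) :=
    ((integrable_sq_mul_exp hb).sub ((integrable_exp_neg_mul_sq hb).div_const _)).integrableOn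
  have hlim : Tendsto F atTop (nhds 0) := by
    have h0 : Tendsto (fun x : ℝ => x * Real.exp (-b * x ^ 2)) atTop (nhds 0) := by
      have hlo := rpow_mul_exp_neg_mul_sq_isLittleO_exp_neg hb 1
      have hlo' : (fun x : ℝ => x * Real.exp (-b * x ^ 2)) =o[atTop]
          fun x : ℝ => Real.exp (-(1/2) * x) := by
        refine hlo.congr' ?_ (EventuallyEq.refl _ _)
        filter_upwards with x
        rw [Real.rpow_one]
      have h12 : Tendsto (fun x : ℝ => x * (1/2)) atTop atTop :=
        tendsto_id.atTop_mul_const (by norm_num)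
      have hexp := tendsto_exp_neg_atTop_nhds_zero.comp h12
      have hexp' : Tendsto (fun x : ℝ => Real.exp (-(1/2) * x)) atTop (nhds 0) := by
        refine hexp.congr fun x => ?_
        simp [Function.comp]
        ring_nf
      exact hlo'.isBigO.trans_tendsto hexp'
    have := (h0.neg).div_const (2 * b)
    simpa [hF, neg_mul] using this
  have hIoi := integral_Ioi_of_hasDerivAt_of_tendsto' hd hint hlim
  have hF0 : F 0 = 0 := by simp [hF]
  rw [hF0, sub_zero] at hIoi
  -- hIoi : ∫ x in Ioi 0, (x^2 * exp - exp/(2b)) = 0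
  have hIoi2 : ∫ x in Ioi (0:ℝ), x ^ 2 * Real.exp (-b * x ^ 2)
      = Real.sqrt (π / b) / (4 * b) := by
    have hadd : ∫ x in Ioi (0:ℝ), x ^ 2 * Real.exp (-b * x ^ 2)
        = (∫ x in Ioi (0:ℝ),
            (x ^ 2 * Real.exp (-b * x ^ 2) - Real.exp (-b * x ^ 2) / (2 * b)))
          + ∫ x in Ioi (0:ℝ), Real.exp (-b * x ^ 2) / (2 * b) := by
      rw [← integral_add hint ((integrable_exp_neg_mul_sq hb).div_const _).integrableOn]
      congr 1; funext x; ring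
    rw [hadd, hIoi, zero_add, integral_div, integral_gaussian_Ioi b]
    ring
  have habs : ∀ x : ℝ, |x| ^ 2 * Real.exp (-b * |x| ^ 2) = x ^ 2 * Real.exp (-b * x ^ 2) := by
    intro x; rw [sq_abs]
  calc ∫ x : ℝ, x ^ 2 * Real.exp (-b * x ^ 2)
      = ∫ x : ℝ, |x| ^ 2 * Real.exp (-b * |x| ^ 2) := by
        congr 1; funext x; rw [habs]
    _ = 2 * ∫ x in Ioi (0:ℝ), x ^ 2 * Real.exp (-b * x ^ 2) :=
        integral_comp_abs (f := fun x => x ^ 2 * Real.exp (-b * x ^ 2))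
    _ = Real.sqrt (π / b) / (2 * b) := by rw [hIoi2]; ring

lemma gaussian_sq_moment {σ₀ : ℝ} (hσ : 0 < σ₀) :
    ∫ x : ℝ, x ^ 2 * gaussianPDFReal 0 ⟨σ₀ ^ 2, sq_nonneg σ₀⟩ x = σ₀ ^ 2 := by
  have hπ := Real.pi_pos
  have hv : ((⟨σ₀ ^ 2, sq_nonneg σ₀⟩ : NNReal) : ℝ) = σ₀ ^ 2 := rfl
  set b : ℝ := (2 * σ₀ ^ 2)⁻¹ with hb
  have hb0 : 0 < b := by positivity
  have hpdf : ∀ x : ℝ, x ^ 2 * gaussianPDFReal 0 ⟨σ₀ ^ 2, sq_nonneg σ₀⟩ x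
      = (Real.sqrt (2 * π * σ₀ ^ 2))⁻¹ * (x ^ 2 * Real.exp (-b * x ^ 2)) := by
    intro x
    simp only [gaussianPDFReal]; erw [NNReal.coe_mk]
    rw [show -(x - 0) ^ 2 / (2 * σ₀ ^ 2) = -b * x ^ 2 by rw [hb]; field_simp; ring]
    ring
  calc ∫ x : ℝ, x ^ 2 * gaussianPDFReal 0 ⟨σ₀ ^ 2, sq_nonneg σ₀⟩ x
      = ∫ x : ℝ, (Real.sqrt (2 * π * σ₀ ^ 2))⁻¹ * (x ^ 2 * Real.exp (-b * x ^ 2)) := by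
        congr 1; funext x; rw [hpdf]
    _ = (Real.sqrt (2 * π * σ₀ ^ 2))⁻¹ * (Real.sqrt (π / b) / (2 * b)) := by
        rw [MeasureTheory.integral_const_mul, integral_sq_mul_exp hb0]
    _ = σ₀ ^ 2 := by
        rw [show π / b = 2 * π * σ₀ ^ 2 by rw [hb]; field_simp]
        have hs : (0:ℝ) < Real.sqrt (2 * π * σ₀ ^ 2) := Real.sqrt_pos.mpr (by positivity)
        rw [hb]
        field_simp

end SmoothShrinkAux

namespace SmoothShrinkAux

lemma gaussian_pdf_cont (v : NNReal) : Continuous (gaussianPDFReal 0 v) := by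
  unfold gaussianPDFReal
  exact continuous_const.mul (Real.continuous_exp.comp (by fun_prop))

lemma gaussian_sq_integrable {σ₀ : ℝ} (hσ : 0 < σ₀) :
    Integrable (fun x : ℝ => x ^ 2 * gaussianPDFReal 0 ⟨σ₀ ^ 2, sq_nonneg σ₀⟩ x) := by
  set b : ℝ := (2 * σ₀ ^ 2)⁻¹ with hb
  have hb0 : 0 < b := by positivity
  have h1 := (integrable_sq_mul_exp hb0).const_mul (Real.sqrt (2 * π * σ₀ ^ 2))⁻¹
  apply h1.congr
  filter_upwards with x
  simp only [gaussianPDFReal]; erw [NNReal.coe_mk]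
  rw [show -(x - 0) ^ 2 / (2 * σ₀ ^ 2) = -b * x ^ 2 by rw [hb]; field_simp; ring]
  ring

end SmoothShrinkAux

/-- The mixture noise measure `(1−α)·N(0, σ₀²) + α·Cauchy(0, γ₀)`. -/
noncomputable def mixtureNoise (α σ₀ γ₀ : ℝ) : Measure ℝ :=
  ENNReal.ofReal (1 - α) • gaussianReal 0 ⟨σ₀ ^ 2, sq_nonneg σ₀⟩
    + ENNReal.ofReal α •
        volume.withDensity (fun x => ENNReal.ofReal (γ₀ / (π * (γ₀ ^ 2 + x ^ 2))))

set_option maxHeartbeats 1000000 in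
/-- Variance bound for smooth shrinkage under Gaussian–Cauchy mixture noise:
if `|g| ≤ B`, `ξ ~ (1−α)N(0,σ₀²) + α·Cauchy(0,γ₀)` with `σ₀ ≤ σ`, `0 < γ₀ ≤ γ`, then
`Var(S_c(g + ξ)) ≤ (1−α)σ² + 8αγc/(πe)`. -/
theorem smooth_shrinkage_variance (α σ σ₀ γ γ₀ c B g : ℝ)
    (hα₀ : 0 ≤ α) (hα₁ : α ≤ 1) (hσ₀ : 0 ≤ σ₀) (hσ : σ₀ ≤ σ)
    (hγ₀ : 0 < γ₀) (hγ : γ₀ ≤ γ) (hc : 0 < c) (hg : |g| ≤ B) :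
    variance (fun x => (g + x) * Real.exp (-|g + x| / c)) (mixtureNoise α σ₀ γ₀)
      ≤ (1 - α) * σ ^ 2 + 8 * α * γ * c / (π * Real.exp 1) := by
  classical
  have hπ := Real.pi_pos
  have he : (0:ℝ) < Real.exp 1 := Real.exp_pos 1
  set v : NNReal := ⟨σ₀ ^ 2, sq_nonneg σ₀⟩ with hv
  set r : ℝ → ℝ := fun x => γ₀ / (π * (γ₀ ^ 2 + x ^ 2)) with hr
  set ν₁ : Measure ℝ := gaussianReal 0 v with hν₁
  set ν₂ : Measure ℝ := volume.withDensity (fun x => ENNReal.ofReal (r x)) with hν₂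
  set μ : Measure ℝ := mixtureNoise α σ₀ γ₀ with hμdef
  have hμ : μ = ENNReal.ofReal (1 - α) • ν₁ + ENNReal.ofReal α • ν₂ := rfl
  set M : ℝ := 2 * (c / Real.exp 1) with hM
  have hM0 : 0 < M := by positivity
  set Y : ℝ → ℝ := fun x => SmoothShrinkAux.S c (g + x) with hYdef
  set a : ℝ := SmoothShrinkAux.S c g with ha
  set Z : ℝ → ℝ := fun x => Y x - a with hZdef
  have hgoal : (fun x : ℝ => (g + x) * Real.exp (-|g + x| / c)) = Y := rfl
  rw [hgoal]
  -- continuity / measurability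
  have hScont : Continuous (SmoothShrinkAux.S c) := by
    unfold SmoothShrinkAux.S
    exact continuous_id.mul (Real.continuous_exp.comp ((continuous_abs.neg).div_const c))
  have hYcont : Continuous Y := hScont.comp (continuous_const.add continuous_id)
  have hZcont : Continuous Z := hYcont.sub continuous_const
  have hrnn : ∀ x, 0 ≤ r x := fun x => div_nonneg hγ₀.le (by positivity)
  have hrcont : Continuous r := by
    apply continuous_const.div (continuous_const.mul (continuous_const.add (continuous_pow 2)))
    intro x
    have : (0:ℝ) < γ₀ ^ 2 + x ^ 2 := by positivity
    exact mul_ne_zero hπ.ne' this.ne'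
  -- pointwise bounds
  have hYb : ∀ x, |Y x| ≤ c / Real.exp 1 := fun x => SmoothShrinkAux.S_abs_le hc _
  have hab : |a| ≤ c / Real.exp 1 := SmoothShrinkAux.S_abs_le hc _
  have hZabs : ∀ x, |Z x| ≤ |x| := by
    intro x
    have h := SmoothShrinkAux.lipschitz_S hc (g + x) g
    simpa [hZdef, hYdef, ha, add_sub_cancel_left] using h
  have hZM : ∀ x, |Z x| ≤ M := by
    intro x
    have h := abs_sub (Y x) a
    calc |Z x| ≤ |Y x| + |a| := abs_sub _ _
      _ ≤ M := by rw [hM]; linarith [hYb x, hab]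
  have hZsq_x : ∀ x, Z x ^ 2 ≤ x ^ 2 := by
    intro x
    have := pow_le_pow_left₀ (abs_nonneg (Z x)) (hZabs x) 2
    simpa [sq_abs] using this
  have hZsq_M : ∀ x, Z x ^ 2 ≤ M ^ 2 := by
    intro x
    have := pow_le_pow_left₀ (abs_nonneg (Z x)) (hZM x) 2
    simpa [sq_abs] using this
  -- probability measures
  haveI hP2 : IsProbabilityMeasure ν₂ := by
    constructor
    rw [hν₂, withDensity_apply _ MeasurableSet.univ, setLIntegral_univ,
      ← ofReal_integral_eq_lintegral_ofReal (SmoothShrinkAux.cauchy_integrable hγ₀)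
        (ae_of_all _ hrnn)]
    rw [show ∫ x : ℝ, r x = 1 from SmoothShrinkAux.cauchy_integral_eq_one hγ₀]
    simp
  haveI hPμ : IsProbabilityMeasure μ := by
    constructor
    rw [hμ]
    simp only [Measure.coe_add, Measure.coe_smul, Pi.add_apply, Pi.smul_apply,
      measure_univ, smul_eq_mul, mul_one]
    rw [← ENNReal.ofReal_add (by linarith) hα₀]
    norm_num
  -- integrability
  have hYm : MemLp Y 2 μ := by
    apply memLp_of_bounded (a := -(c / Real.exp 1)) (b := c / Real.exp 1)
      (ae_of_all _ fun x => abs_le.mp (hYb x)) hYcont.aestronglyMeasurable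
  have hZm : MemLp Z 2 μ := hYm.sub (memLp_const a)
  have hY1 : Integrable Y μ := hYm.integrable one_le_two
  have hY2 : Integrable (fun x => Y x ^ 2) μ := hYm.integrable_sq
  have hZ2 : Integrable (fun x => Z x ^ 2) μ := hZm.integrable_sq
  -- variance ≤ ∫ Z²
  have hvar := variance_eq_sub hYm
  simp only [Pi.pow_apply] at hvar
  have hZexp : ∫ x, Z x ^ 2 ∂μ
      = (∫ x, Y x ^ 2 ∂μ) - 2 * a * (∫ x, Y x ∂μ) + a ^ 2 := by
    have hconst : Integrable (fun _ : ℝ => a ^ 2) μ := integrable_const _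
    have h2aY : Integrable (fun x => 2 * a * Y x) μ := hY1.const_mul (2 * a)
    have hsub : Integrable (fun x => Y x ^ 2 - 2 * a * Y x) μ := hY2.sub h2aY
    have e1 : ∫ x, Z x ^ 2 ∂μ = ∫ x, (Y x ^ 2 - 2 * a * Y x + a ^ 2) ∂μ := by
      congr 1; funext x; rw [hZdef]; ring
    rw [e1, integral_add hsub hconst, integral_sub hY2 h2aY,
      MeasureTheory.integral_const_mul, integral_const, probReal_univ, one_smul]
  have hkey : variance Y μ ≤ ∫ x, Z x ^ 2 ∂μ := by
    nlinarith [sq_nonneg ((∫ x, Y x ∂μ) - a)]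
  -- split the mixture
  obtain ⟨hZ2a, hZ2b⟩ := integrable_add_measure.mp (hμ ▸ hZ2)
  have hsplit : ∫ x, Z x ^ 2 ∂μ
      = (1 - α) * (∫ x, Z x ^ 2 ∂ν₁) + α * ∫ x, Z x ^ 2 ∂ν₂ := by
    rw [hμ, integral_add_measure hZ2a hZ2b, integral_smul_measure, integral_smul_measure,
      ENNReal.toReal_ofReal (by linarith : (0:ℝ) ≤ 1 - α), ENNReal.toReal_ofReal hα₀,
      smul_eq_mul, smul_eq_mul]
  -- Gaussian branch
  have hg1 : ∫ x, Z x ^ 2 ∂ν₁ ≤ σ₀ ^ 2 := by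
    rcases eq_or_lt_of_le hσ₀ with h0 | h0
    · have hv0 : v = 0 := by
        rw [hv]; apply NNReal.coe_injective; simp [← h0]; rfl
      rw [hν₁, hv0, gaussianReal_zero_var, integral_dirac]
      have hZ0 : Z 0 = 0 := by simp [hZdef, hYdef, ha]
      rw [hZ0]
      nlinarith [sq_nonneg σ₀]
    · have hvne : v ≠ 0 := by
        intro hcon
        have : ((v : NNReal) : ℝ) = 0 := by rw [hcon]; simp
        rw [hv] at this
        erw [NNReal.coe_mk] at this
        nlinarith
      have hwd : ν₁ = volume.withDensity
          (fun x => (((gaussianPDFReal 0 v x).toNNReal : ℝ≥0) : ℝ≥0∞)) := by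
        rw [hν₁, gaussianReal_of_var_ne_zero _ hvne]; rfl
      rw [hwd, integral_withDensity_eq_integral_smul
        ((measurable_gaussianPDFReal 0 v).real_toNNReal)]
      have hsm : ∀ x : ℝ, ((gaussianPDFReal 0 v x).toNNReal : ℝ≥0) • (Z x ^ 2)
          = gaussianPDFReal 0 v x * Z x ^ 2 := by
        intro x
        rw [NNReal.smul_def, Real.coe_toNNReal _ (gaussianPDFReal_nonneg _ _ _), smul_eq_mul]
      rw [show (fun x => ((gaussianPDFReal 0 v x).toNNReal : ℝ≥0) • (Z x ^ 2))
          = fun x => gaussianPDFReal 0 v x * Z x ^ 2 from funext hsm]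
      have hdom := SmoothShrinkAux.gaussian_sq_integrable h0
      have hle : ∀ x : ℝ, gaussianPDFReal 0 v x * Z x ^ 2
          ≤ x ^ 2 * gaussianPDFReal 0 v x := by
        intro x
        rw [mul_comm]
        exact mul_le_mul_of_nonneg_right (hZsq_x x) (gaussianPDFReal_nonneg _ _ _)
      have hint1 : Integrable (fun x => gaussianPDFReal 0 v x * Z x ^ 2) := by
        apply hdom.mono' (((SmoothShrinkAux.gaussian_pdf_cont v).mul (hZcont.pow 2)).aestronglyMeasurable)
        filter_upwards with x
        rw [Real.norm_eq_abs, Pi.mul_apply, Pi.pow_apply, abs_of_nonneg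
          (mul_nonneg (gaussianPDFReal_nonneg _ _ _) (sq_nonneg _))]
        exact hle x
      calc ∫ x, gaussianPDFReal 0 v x * Z x ^ 2 ≤ ∫ x, x ^ 2 * gaussianPDFReal 0 v x :=
            integral_mono hint1 hdom hle
        _ = σ₀ ^ 2 := SmoothShrinkAux.gaussian_sq_moment h0
  -- Cauchy branch
  have hc1 : ∫ x, Z x ^ 2 ∂ν₂ ≤ 4 * γ₀ * M / π := by
    have hwd : ν₂ = volume.withDensity (fun x => (((r x).toNNReal : ℝ≥0) : ℝ≥0∞)) := rfl
    have hrmeas : Measurable fun x => (r x).toNNReal := hrcont.measurable.real_toNNReal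
    rw [hwd, integral_withDensity_eq_integral_smul hrmeas]
    have hsm : ∀ x : ℝ, ((r x).toNNReal : ℝ≥0) • (Z x ^ 2) = r x * Z x ^ 2 := by
      intro x
      rw [NNReal.smul_def, Real.coe_toNNReal _ (hrnn x), smul_eq_mul]
    rw [show (fun x => ((r x).toNNReal : ℝ≥0) • (Z x ^ 2)) = fun x => r x * Z x ^ 2
      from funext hsm]
    have hble : ∀ x : ℝ, r x * Z x ^ 2 ≤ SmoothShrinkAux.ψ γ₀ M x := by
      intro x
      unfold SmoothShrinkAux.ψ
      rcases le_total (x ^ 2) (M ^ 2) with h | h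
      · rw [max_eq_right h, div_self (by positivity : (M:ℝ) ^ 2 ≠ 0), mul_one]
        have h1 : r x * Z x ^ 2 ≤ r x * x ^ 2 :=
          mul_le_mul_of_nonneg_left (hZsq_x x) (hrnn x)
        have h2 : r x * x ^ 2 ≤ γ₀ / π := by
          rw [hr]
          rw [div_mul_eq_mul_div, div_le_div_iff₀ (by positivity) hπ]
          nlinarith [sq_nonneg x, mul_pos (mul_pos hγ₀ hπ) (pow_pos hγ₀ 2)]
        exact le_trans h1 h2
      · rw [max_eq_left h]
        have hx2 : (0:ℝ) < x ^ 2 := lt_of_lt_of_le (by positivity) h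
        have h1 : r x * Z x ^ 2 ≤ r x * M ^ 2 :=
          mul_le_mul_of_nonneg_left (hZsq_M x) (hrnn x)
        have h2 : r x * M ^ 2 ≤ γ₀ / π * (M ^ 2 / x ^ 2) := by
          rw [hr]
          have e2 : γ₀ / (π * (γ₀ ^ 2 + x ^ 2)) * M ^ 2
              = γ₀ * M ^ 2 / (π * (γ₀ ^ 2 + x ^ 2)) := by ring
          have e3 : γ₀ / π * (M ^ 2 / x ^ 2) = γ₀ * M ^ 2 / (π * x ^ 2) := by
            field_simp
          rw [e2, e3]
          gcongr
          nlinarith [sq_nonneg γ₀]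
        exact le_trans h1 h2
    have hint1 : Integrable (fun x => r x * Z x ^ 2) := by
      apply (SmoothShrinkAux.ψ_integrable hγ₀ hM0).mono'
        ((hrcont.mul (hZcont.pow 2)).aestronglyMeasurable)
      filter_upwards with x
      rw [Real.norm_eq_abs, Pi.mul_apply, Pi.pow_apply, abs_of_nonneg (mul_nonneg (hrnn x) (sq_nonneg _))]
      exact hble x
    calc ∫ x, r x * Z x ^ 2 ≤ ∫ x, SmoothShrinkAux.ψ γ₀ M x :=
          integral_mono hint1 (SmoothShrinkAux.ψ_integrable hγ₀ hM0) hble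
      _ = 4 * γ₀ * M / π := SmoothShrinkAux.ψ_integral hγ₀ hM0
  -- combine
  have hfin1 : (1 - α) * (∫ x, Z x ^ 2 ∂ν₁) ≤ (1 - α) * σ ^ 2 := by
    have hσ2 : σ₀ ^ 2 ≤ σ ^ 2 := pow_le_pow_left₀ hσ₀ hσ 2
    have := mul_le_mul_of_nonneg_left (le_trans hg1 hσ2) (by linarith : (0:ℝ) ≤ 1 - α)
    exact this
  have hfin2 : α * (∫ x, Z x ^ 2 ∂ν₂) ≤ 8 * α * γ * c / (π * Real.exp 1) := by
    have h1 : α * (∫ x, Z x ^ 2 ∂ν₂) ≤ α * (4 * γ₀ * M / π) :=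
      mul_le_mul_of_nonneg_left hc1 hα₀
    have h2 : α * (4 * γ₀ * M / π) = 8 * α * γ₀ * c / (π * Real.exp 1) := by
      rw [hM]; field_simp; ring
    have h3 : 8 * α * γ₀ * c / (π * Real.exp 1) ≤ 8 * α * γ * c / (π * Real.exp 1) := by
      gcongr
    linarith
  calc variance Y μ ≤ ∫ x, Z x ^ 2 ∂μ := hkey
    _ = (1 - α) * (∫ x, Z x ^ 2 ∂ν₁) + α * ∫ x, Z x ^ 2 ∂ν₂ := hsplit
    _ ≤ (1 - α) * σ ^ 2 + 8 * α * γ * c / (π * Real.exp 1) := by linarith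
end

section
/- Let F : ℝ^{m×n} → ℝ be L-smooth (Frobenius norm), let Ḡ ∈ ℝ^{m×n} be arbitrary, set E = Ḡ − G where G = ∇F(X), and let U = msign(Ḡ) = UV^T from the SVD Ḡ = UΣV^T. Then for the update X⁺ = X − η·U with η > 0 and r = min{m, n}: F(X⁺) ≤ F(X) − η·‖G‖_* + 2η·‖E‖_* + Lη²r/2, where ‖·‖_* is the nuclear norm. -/
open Matrix

/-- Frobenius inner product of two matrices. -/
def frobInner {m n : ℕ} (A B : Matrix (Fin m) (Fin n) ℝ) : ℝ :=
  ∑ i, ∑ j, A i j * B i j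

/-- The square root of a positive semidefinite matrix, as `Matrix.PosSemidef.sqrt` was
defined in the older Mathlib (removed since). -/
noncomputable def posSemidefSqrt {n : ℕ} {A : Matrix (Fin n) (Fin n) ℝ} (hA : A.PosSemidef) :
    Matrix (Fin n) (Fin n) ℝ :=
  hA.1.eigenvectorUnitary.1 * diagonal ((↑) ∘ (√·) ∘ hA.1.eigenvalues) *
  (star hA.1.eigenvectorUnitary : Matrix (Fin n) (Fin n) ℝ)

/-- The nuclear norm of a matrix: the trace of the positive semidefinite square root
of `MᵀM` (i.e. the sum of singular values). -/
noncomputable def nuclearNorm {m n : ℕ} (M : Matrix (Fin m) (Fin n) ℝ) : ℝ :=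
  (posSemidefSqrt (Matrix.posSemidef_conjTranspose_mul_self M)).trace

open scoped MatrixOrder in
lemma posSemidefSqrt_eq_of_sq_eq {n : ℕ} {A B : Matrix (Fin n) (Fin n) ℝ} (hA : A.PosSemidef)
    (hB : B.PosSemidef) (h : A ^ 2 = B) : A = posSemidefSqrt hB := by
  have h1 : posSemidefSqrt hB = CFC.sqrt B := by
    rw [CFC.sqrt_eq_cfc, cfc_nnreal_eq_real _ B hB.nonneg, hB.1.cfc_eq]
    simp only [Matrix.IsHermitian.cfc, posSemidefSqrt, Unitary.conjStarAlgAut_apply]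
    congr 2
    ext i j
    by_cases hij : i = j
    · subst hij
      simp [Matrix.diagonal_apply, max_eq_left (hB.eigenvalues_nonneg i)]
    · simp [Matrix.diagonal_apply, hij]
  rw [h1, eq_comm, CFC.sqrt_eq_iff _ _ hB.nonneg hA.nonneg, ← sq, h]


lemma nuclearNorm_eq_sum_sqrt {m n : ℕ} (A : Matrix (Fin m) (Fin n) ℝ) :
    nuclearNorm A = ∑ j, Real.sqrt ((Matrix.posSemidef_conjTranspose_mul_self A).1.eigenvalues j) := by
  rw [nuclearNorm, posSemidefSqrt, Matrix.trace_mul_cycle,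
    Unitary.coe_star_mul_self, one_mul, Matrix.trace_diagonal]
  simp

lemma mulVec_dot_mulVec {m n : ℕ} (A : Matrix (Fin m) (Fin n) ℝ) (x y : Fin n → ℝ) :
    (A *ᵥ x) ⬝ᵥ (A *ᵥ y) = x ⬝ᵥ ((Aᵀ * A) *ᵥ y) := by
  rw [dotProduct_mulVec, dotProduct_mulVec, Matrix.vecMul_mulVec]

lemma frobInner_eq_trace {m n : ℕ} (A B : Matrix (Fin m) (Fin n) ℝ) :
    frobInner A B = Matrix.trace (Aᵀ * B) := by
  simp [frobInner, Matrix.trace, Matrix.mul_apply, Matrix.diag]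
  rw [Finset.sum_comm]

lemma frob_le_nuclear {m n : ℕ} (A W : Matrix (Fin m) (Fin n) ℝ)
    (hW : ∀ x : Fin n → ℝ, (W *ᵥ x) ⬝ᵥ (W *ᵥ x) ≤ x ⬝ᵥ x) :
    frobInner A W ≤ nuclearNorm A := by
  classical
  set hH := (Matrix.posSemidef_conjTranspose_mul_self A).1 with hHdef
  set V0 : Matrix (Fin n) (Fin n) ℝ := (hH.eigenvectorUnitary : Matrix (Fin n) (Fin n) ℝ) with hV0
  set μ : Fin n → ℝ := hH.eigenvalues with hμ
  have hμ0 : ∀ j, 0 ≤ μ j := fun j =>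
    (Matrix.posSemidef_conjTranspose_mul_self A).eigenvalues_nonneg j
  have hstar : star V0 * V0 = 1 := Unitary.coe_star_mul_self _
  have hself : V0 * star V0 = 1 := Unitary.coe_mul_star_self _
  have hAA : Aᴴ = Aᵀ := Matrix.conjTranspose_eq_transpose_of_trivial A
  have hTA : Aᵀ * A = Aᴴ * A := by rw [hAA]
  have hdiag : star V0 * (Aᵀ * A) * V0 = Matrix.diagonal μ := by
    rw [hTA]
    have h : star V0 * (Aᴴ * A) * V0
        = Matrix.diagonal (RCLike.ofReal ∘ μ) := by
      have := Matrix.IsHermitian.conjStarAlgAut_star_eigenvectorUnitary hH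
      rwa [Unitary.conjStarAlgAut_star_apply] at this
    rw [h]
    ext i k
    simp [Matrix.diagonal_apply]
  have hMV : (Aᵀ * A) * V0 = V0 * Matrix.diagonal μ := by
    have h : V0 * (star V0 * (Aᵀ * A) * V0) = (Aᵀ * A) * V0 := by
      rw [← mul_assoc, ← mul_assoc, hself, one_mul]
    rw [hdiag] at h
    exact h.symm
  set v : Fin n → Fin n → ℝ := fun j i => V0 i j with hv
  have hv_unit : ∀ j, v j ⬝ᵥ v j = 1 := by
    intro j
    have h := congrFun (congrFun hstar j) j
    simpa [Matrix.mul_apply, Matrix.one_apply, dotProduct, Matrix.star_apply, v] using h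
  have hv_col : ∀ j, v j = V0 *ᵥ Pi.single j 1 := by
    intro j; ext i; simp [v]
  have hv_eig : ∀ j, (Aᵀ * A) *ᵥ v j = μ j • v j := by
    intro j
    rw [hv_col, Matrix.mulVec_mulVec, hMV, ← Matrix.mulVec_mulVec,
      Matrix.diagonal_mulVec_single]
    have h : (Pi.single j (μ j * 1) : Fin n → ℝ) = μ j • (Pi.single j 1 : Fin n → ℝ) := by
      ext i
      by_cases hij : i = j <;> simp [Pi.single_apply, hij]
    rw [h, Matrix.mulVec_smul]
  have ha : ∀ j, (A *ᵥ v j) ⬝ᵥ (A *ᵥ v j) = μ j := by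
    intro j
    rw [mulVec_dot_mulVec, hv_eig, dotProduct_smul, hv_unit]
    simp
  have hselfT : V0 * V0ᵀ = 1 := by
    have h := hself
    rwa [Matrix.star_eq_conjTranspose, Matrix.conjTranspose_eq_transpose_of_trivial] at h
  have hfrob : frobInner A W = ∑ j, (A *ᵥ v j) ⬝ᵥ (W *ᵥ v j) := by
    have h2 : ∀ j, (A *ᵥ v j) ⬝ᵥ (W *ᵥ v j) = ((A * V0)ᵀ * (W * V0)) j j := by
      intro j
      simp [Matrix.mul_apply, dotProduct, Matrix.mulVec, v, mul_comm]
    have h3 : ∑ j, (A *ᵥ v j) ⬝ᵥ (W *ᵥ v j) = Matrix.trace ((A * V0)ᵀ * (W * V0)) := by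
      rw [Matrix.trace]
      exact Finset.sum_congr rfl fun j _ => h2 j
    rw [frobInner_eq_trace, h3, Matrix.transpose_mul, Matrix.trace_mul_cycle,
      Matrix.mul_assoc W V0 V0ᵀ, hselfT, Matrix.mul_one, Matrix.trace_mul_comm]
  rw [hfrob, nuclearNorm_eq_sum_sqrt]
  apply Finset.sum_le_sum
  intro j _
  have hw1 : (W *ᵥ v j) ⬝ᵥ (W *ᵥ v j) ≤ 1 := by
    have := hW (v j); rwa [hv_unit j] at this
  have hcs : ((A *ᵥ v j) ⬝ᵥ (W *ᵥ v j)) ^ 2 ≤ μ j * ((W *ᵥ v j) ⬝ᵥ (W *ᵥ v j)) := by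
    have h := Finset.sum_mul_sq_le_sq_mul_sq Finset.univ (A *ᵥ v j) (W *ᵥ v j)
    calc ((A *ᵥ v j) ⬝ᵥ (W *ᵥ v j)) ^ 2
        = (∑ i, (A *ᵥ v j) i * (W *ᵥ v j) i) ^ 2 := rfl
      _ ≤ (∑ i, (A *ᵥ v j) i ^ 2) * (∑ i, (W *ᵥ v j) i ^ 2) := h
      _ = μ j * ((W *ᵥ v j) ⬝ᵥ (W *ᵥ v j)) := by
          rw [← ha j]; simp [dotProduct, sq]
  calc (A *ᵥ v j) ⬝ᵥ (W *ᵥ v j) ≤ |(A *ᵥ v j) ⬝ᵥ (W *ᵥ v j)| := le_abs_self _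
    _ = Real.sqrt (((A *ᵥ v j) ⬝ᵥ (W *ᵥ v j)) ^ 2) := (Real.sqrt_sq_eq_abs _).symm
    _ ≤ Real.sqrt (μ j * 1) := by
        apply Real.sqrt_le_sqrt
        calc ((A *ᵥ v j) ⬝ᵥ (W *ᵥ v j)) ^ 2 ≤ μ j * ((W *ᵥ v j) ⬝ᵥ (W *ᵥ v j)) := hcs
          _ ≤ μ j * 1 := by
              apply mul_le_mul_of_nonneg_left hw1 (hμ0 j)
    _ = Real.sqrt (μ j) := by rw [mul_one]

lemma contractive_aux {n : ℕ} (Q : Matrix (Fin n) (Fin n) ℝ)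
    (hQ : Q * Qᵀ = 1) (c : Fin n → ℝ) (hc : ∀ j, c j ≤ 1) (x : Fin n → ℝ) :
    x ⬝ᵥ ((Q * Matrix.diagonal c * Qᵀ) *ᵥ x) ≤ x ⬝ᵥ x := by
  have hy : ∀ z : Fin n → ℝ, x ⬝ᵥ (Q *ᵥ z) = (Qᵀ *ᵥ x) ⬝ᵥ z := by
    intro z
    rw [dotProduct_mulVec]
    congr 1
    rw [← Matrix.vecMul_transpose, Matrix.transpose_transpose]
  set y := Qᵀ *ᵥ x with hy'
  have h1 : x ⬝ᵥ ((Q * Matrix.diagonal c * Qᵀ) *ᵥ x) = y ⬝ᵥ (Matrix.diagonal c *ᵥ y) := by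
    rw [← Matrix.mulVec_mulVec, ← Matrix.mulVec_mulVec, hy]
  have h2 : y ⬝ᵥ y = x ⬝ᵥ x := by
    rw [hy', mulVec_dot_mulVec, Matrix.transpose_transpose, hQ, Matrix.one_mulVec]
  rw [h1, ← h2]
  simp only [dotProduct, Matrix.mulVec_diagonal]
  apply Finset.sum_le_sum
  intro j _
  have : c j * y j * y j ≤ 1 * (y j * y j) := by
    rw [mul_assoc]
    exact mul_le_mul_of_nonneg_right (hc j) (mul_self_nonneg _)
  calc y j * (c j * y j) = c j * y j * y j := by ring
    _ ≤ 1 * (y j * y j) := this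
    _ = y j * y j := one_mul _

lemma nuclearNorm_add_le {m n : ℕ} (A B : Matrix (Fin m) (Fin n) ℝ) :
    nuclearNorm (A + B) ≤ nuclearNorm A + nuclearNorm B := by
  classical
  set M := A + B with hM
  set hH := (Matrix.posSemidef_conjTranspose_mul_self M).1 with hHdef
  set V0 : Matrix (Fin n) (Fin n) ℝ := (hH.eigenvectorUnitary : Matrix (Fin n) (Fin n) ℝ) with hV0
  set μ : Fin n → ℝ := hH.eigenvalues with hμ
  have hμ0 : ∀ j, 0 ≤ μ j := fun j =>
    (Matrix.posSemidef_conjTranspose_mul_self M).eigenvalues_nonneg j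
  have hstar : star V0 * V0 = 1 := Unitary.coe_star_mul_self _
  have hself : V0 * star V0 = 1 := Unitary.coe_mul_star_self _
  have hconj : ∀ {k l : ℕ} (C : Matrix (Fin k) (Fin l) ℝ), Cᴴ = Cᵀ := fun C =>
    Matrix.conjTranspose_eq_transpose_of_trivial C
  have hstarT : V0ᵀ * V0 = 1 := by
    have h := hstar
    rwa [Matrix.star_eq_conjTranspose, hconj] at h
  have hselfT : V0 * V0ᵀ = 1 := by
    have h := hself
    rwa [Matrix.star_eq_conjTranspose, hconj] at h
  have hdiagT : V0ᵀ * (Mᵀ * M) * V0 = Matrix.diagonal μ := by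
    have h : star V0 * (Mᴴ * M) * V0
        = Matrix.diagonal (RCLike.ofReal ∘ μ) := by
      have := Matrix.IsHermitian.conjStarAlgAut_star_eigenvectorUnitary hH
      rwa [Unitary.conjStarAlgAut_star_apply] at this
    rw [Matrix.star_eq_conjTranspose, hconj] at h
    rw [show Mᵀ * M = Mᴴ * M by rw [hconj], h]
    ext i k
    simp [Matrix.diagonal_apply]
  set d : Fin n → ℝ := fun j => if μ j = 0 then 0 else (Real.sqrt (μ j))⁻¹ with hd
  set W : Matrix (Fin m) (Fin n) ℝ := M * V0 * Matrix.diagonal d * V0ᵀ with hW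
  -- W is contractive
  have hWT : Wᵀ * W = V0 * Matrix.diagonal (fun j => d j * μ j * d j) * V0ᵀ := by
    rw [hW]
    have : (M * V0 * Matrix.diagonal d * V0ᵀ)ᵀ = V0 * Matrix.diagonal d * (V0ᵀ * Mᵀ) := by
      simp [Matrix.transpose_mul, Matrix.diagonal_transpose, Matrix.mul_assoc]
    rw [this]
    have : V0 * Matrix.diagonal d * (V0ᵀ * Mᵀ) * (M * V0 * Matrix.diagonal d * V0ᵀ)
        = V0 * Matrix.diagonal d * (V0ᵀ * (Mᵀ * M) * V0) * Matrix.diagonal d * V0ᵀ := by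
      simp only [Matrix.mul_assoc]
    rw [this, hdiagT]
    have h3 : V0 * Matrix.diagonal d * Matrix.diagonal μ * Matrix.diagonal d * V0ᵀ
        = V0 * (Matrix.diagonal d * Matrix.diagonal μ * Matrix.diagonal d) * V0ᵀ := by
      simp only [Matrix.mul_assoc]
    rw [h3, Matrix.diagonal_mul_diagonal, Matrix.diagonal_mul_diagonal]
  have hcontr : ∀ x : Fin n → ℝ, (W *ᵥ x) ⬝ᵥ (W *ᵥ x) ≤ x ⬝ᵥ x := by
    intro x
    rw [mulVec_dot_mulVec, hWT]
    apply contractive_aux V0 hselfT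
    intro j
    by_cases h0 : μ j = 0
    · simp only [hd]
      rw [if_pos h0]
      norm_num
    · have hpos : 0 < μ j := lt_of_le_of_ne (hμ0 j) (Ne.symm h0)
      have hs : 0 < Real.sqrt (μ j) := Real.sqrt_pos.mpr hpos
      have hss : Real.sqrt (μ j) * Real.sqrt (μ j) = μ j := Real.mul_self_sqrt (hμ0 j)
      have hsq : Real.sqrt (μ j) ^ 2 = μ j := Real.sq_sqrt (hμ0 j)
      simp only [hd]
      rw [if_neg h0]
      have h1 : (Real.sqrt (μ j))⁻¹ * μ j * (Real.sqrt (μ j))⁻¹ = 1 := by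
        field_simp
        try linarith [hss, hsq]
      rw [h1]
  -- frobInner M W = nuclearNorm M
  have hMW : frobInner M W = nuclearNorm M := by
    rw [frobInner_eq_trace, hW]
    have h1 : Mᵀ * (M * V0 * Matrix.diagonal d * V0ᵀ)
        = (Mᵀ * M * V0) * (Matrix.diagonal d * V0ᵀ) := by
      simp only [Matrix.mul_assoc]
    rw [h1, Matrix.trace_mul_cycle]
    have h2 : Matrix.diagonal d * V0ᵀ * (Mᵀ * M) * V0
        = Matrix.diagonal d * (V0ᵀ * (Mᵀ * M) * V0) := by
      simp only [Matrix.mul_assoc]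
    rw [h2, hdiagT, Matrix.diagonal_mul_diagonal, Matrix.trace_diagonal,
      nuclearNorm_eq_sum_sqrt]
    simp only [← hHdef, ← hμ]
    apply Finset.sum_congr rfl
    intro j _
    by_cases h0 : μ j = 0
    · simp only [hd]
      rw [if_pos h0, h0]
      simp
    · have hpos : 0 < μ j := lt_of_le_of_ne (hμ0 j) (Ne.symm h0)
      have hs : 0 < Real.sqrt (μ j) := Real.sqrt_pos.mpr hpos
      have hss : Real.sqrt (μ j) * Real.sqrt (μ j) = μ j := Real.mul_self_sqrt (hμ0 j)
      have hsq : Real.sqrt (μ j) ^ 2 = μ j := Real.sq_sqrt (hμ0 j)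
      simp only [hd]
      rw [if_neg h0]
      field_simp
      try linarith [hss, hsq]
  have hA := frob_le_nuclear A W hcontr
  have hB := frob_le_nuclear B W hcontr
  have hadd : frobInner M W = frobInner A W + frobInner B W := by
    simp [frobInner, hM, Matrix.add_apply, add_mul, Finset.sum_add_distrib]
  linarith [hMW, hadd, hA, hB]

lemma nuclearNorm_eq_of_gram_eq {m m' n : ℕ} (M : Matrix (Fin m) (Fin n) ℝ)
    (N : Matrix (Fin m') (Fin n) ℝ) (h : Mᴴ * M = Nᴴ * N) :
    nuclearNorm M = nuclearNorm N := by
  unfold nuclearNorm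
  have key : ∀ (X Y : Matrix (Fin n) (Fin n) ℝ) (hX : X.PosSemidef) (hY : Y.PosSemidef),
      X = Y → (posSemidefSqrt hX).trace = (posSemidefSqrt hY).trace := by
    rintro X Y hX hY rfl
    rfl
  exact key _ _ _ _ h

lemma sum_ite_coe_eq {m n : ℕ} (k : Fin n) (f : Fin m → ℝ) :
    (∑ i : Fin m, if (i : ℕ) = (k : ℕ) then f i else 0)
      = if h : (k : ℕ) < m then f ⟨k, h⟩ else 0 := by
  by_cases h : (k : ℕ) < m
  · rw [dif_pos h]
    rw [Finset.sum_eq_single ⟨k, h⟩]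
    · simp
    · intro i _ hne
      rw [if_neg]
      intro hik
      exact hne (Fin.ext hik)
    · intro habs
      exact absurd (Finset.mem_univ _) habs
  · rw [dif_neg h]
    apply Finset.sum_eq_zero
    intro i _
    rw [if_neg]
    intro hik
    exact h (hik ▸ i.isLt)

section SVD
variable {m n : ℕ} (S : Matrix (Fin m) (Fin n) ℝ)
  (hS_diag : ∀ (i : Fin m) (j : Fin n), (i : ℕ) ≠ (j : ℕ) → S i j = 0)

/-- the rectangular identity-like matrix -/
def Jmat (m n : ℕ) : Matrix (Fin m) (Fin n) ℝ :=
  Matrix.of fun (i : Fin m) (j : Fin n) => if (i : ℕ) = (j : ℕ) then (1 : ℝ) else 0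

/-- diagonal values of S extended to Fin n -/
noncomputable def dval (S : Matrix (Fin m) (Fin n) ℝ) : Fin n → ℝ :=
  fun j => if h : (j : ℕ) < m then S ⟨j, h⟩ j else 0

include hS_diag in
lemma SJ_eq : Sᵀ * Jmat m n = Matrix.diagonal (dval S) := by
  ext j k
  have h1 : (Sᵀ * Jmat m n) j k = ∑ i : Fin m, if (i : ℕ) = (k : ℕ) then S i j else 0 := by
    simp [Matrix.mul_apply, Jmat, mul_ite]
  rw [h1, sum_ite_coe_eq]
  rw [Matrix.diagonal_apply]
  by_cases hjk : j = k
  · subst hjk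
    simp [dval]
  · rw [if_neg hjk]
    by_cases h : (k : ℕ) < m
    · rw [dif_pos h]
      exact hS_diag ⟨k, h⟩ j (fun hc => hjk (Fin.ext (by simpa using hc.symm)))
    · rw [dif_neg h]

include hS_diag in
lemma SS_eq : Sᵀ * S = Matrix.diagonal (fun j => dval S j * dval S j) := by
  ext j k
  have h1 : (Sᵀ * S) j k = ∑ i : Fin m, if (i : ℕ) = (k : ℕ) then S i j * S i k else 0 := by
    rw [Matrix.mul_apply]
    apply Finset.sum_congr rfl
    intro i _
    by_cases h : (i : ℕ) = (k : ℕ)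
    · rw [if_pos h]
      rfl
    · rw [if_neg h, hS_diag i k h, mul_zero]
  rw [h1, sum_ite_coe_eq, Matrix.diagonal_apply]
  by_cases hjk : j = k
  · subst hjk
    rw [if_pos rfl]
    unfold dval
    by_cases h : (j : ℕ) < m
    · simp only [dif_pos h]
    · simp only [dif_neg h, mul_zero]
  · rw [if_neg hjk]
    by_cases h : (k : ℕ) < m
    · rw [dif_pos h, hS_diag ⟨k, h⟩ j (fun hc => hjk (Fin.ext (by simpa using hc.symm))),
        zero_mul]
    · rw [dif_neg h]

lemma JJ_eq : (Jmat m n)ᵀ * Jmat m n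
    = Matrix.diagonal (fun j : Fin n => if (j : ℕ) < m then (1 : ℝ) else 0) := by
  ext j k
  have h1 : ((Jmat m n)ᵀ * Jmat m n) j k
      = ∑ i : Fin m, if (i : ℕ) = (k : ℕ) then (if (i : ℕ) = (j : ℕ) then (1:ℝ) else 0) else 0 := by
    rw [Matrix.mul_apply]
    apply Finset.sum_congr rfl
    intro i _
    by_cases h : (i : ℕ) = (k : ℕ)
    · rw [if_pos h]
      simp only [Jmat, Matrix.of_apply, Matrix.transpose_apply, if_pos h, mul_one]
    · rw [if_neg h]
      simp only [Jmat, Matrix.of_apply, Matrix.transpose_apply, if_neg h, mul_zero]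
  rw [h1, sum_ite_coe_eq, Matrix.diagonal_apply]
  by_cases hjk : j = k
  · subst hjk
    by_cases h : (j : ℕ) < m
    · simp [h]
    · simp [h]
  · rw [if_neg hjk]
    by_cases h : (k : ℕ) < m
    · rw [dif_pos h, if_neg]
      intro hc
      exact hjk (Fin.ext (by simpa using hc.symm))
    · rw [dif_neg h]

lemma sum_dval_min {m n : ℕ} :
    (∑ j : Fin n, if (j : ℕ) < m then (1 : ℝ) else 0) = (min m n : ℕ) := by
  rw [Fin.sum_univ_eq_sum_range (fun j => if j < m then (1 : ℝ) else 0) n,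
    Finset.sum_boole]
  norm_cast
  rw [show (Finset.range n).filter (fun j => j < m) = Finset.range (min m n) by
    ext x
    simp [Nat.lt_min, And.comm]]
  rw [Finset.card_range]

end SVD

/-- Matrix-sign descent: if `F` is `L`-smooth w.r.t. the Frobenius norm, `Ḡ` is arbitrary
with `E = Ḡ − ∇F(X)`, and `W = msign(Ḡ) = U·J·Vᵀ` from an SVD `Ḡ = U·S·Vᵀ`, then
the update `X⁺ = X − η·W` satisfies
`F(X⁺) ≤ F(X) − η‖∇F(X)‖_* + 2η‖E‖_* + Lη²r/2` with `r = min{m, n}`. -/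
theorem matrix_sign_descent {m n : ℕ}
    (F : Matrix (Fin m) (Fin n) ℝ → ℝ) (gradF : Matrix (Fin m) (Fin n) ℝ → Matrix (Fin m) (Fin n) ℝ)
    (L η : ℝ) (hL : 0 ≤ L) (hη : 0 < η)
    (h_smooth : ∀ X Y, F Y ≤ F X + frobInner (gradF X) (Y - X)
      + L / 2 * frobInner (Y - X) (Y - X))
    (X Gbar : Matrix (Fin m) (Fin n) ℝ)
    (U : Matrix (Fin m) (Fin m) ℝ) (V : Matrix (Fin n) (Fin n) ℝ)
    (S : Matrix (Fin m) (Fin n) ℝ)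
    (hU : U ∈ Matrix.orthogonalGroup (Fin m) ℝ)
    (hV : V ∈ Matrix.orthogonalGroup (Fin n) ℝ)
    (hS_diag : ∀ (i : Fin m) (j : Fin n), (i : ℕ) ≠ (j : ℕ) → S i j = 0)
    (hS_nonneg : ∀ i j, 0 ≤ S i j)
    (h_svd : Gbar = U * S * Vᵀ) :
    F (X - η • (U * (Matrix.of fun (i : Fin m) (j : Fin n) => if (i : ℕ) = (j : ℕ) then (1 : ℝ) else 0) * Vᵀ))
      ≤ F X - η * nuclearNorm (gradF X)
        + 2 * η * nuclearNorm (Gbar - gradF X)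
        + L * η ^ 2 * (min m n) / 2 := by
  classical
  have hconj : ∀ {k l : ℕ} (C : Matrix (Fin k) (Fin l) ℝ), Cᴴ = Cᵀ := fun C =>
    Matrix.conjTranspose_eq_transpose_of_trivial C
  -- orthogonality facts
  have hU' := (Unitary.mem_iff).mp hU
  have hV' := (Unitary.mem_iff).mp hV
  have hUT : Uᵀ * U = 1 := by
    have h := hU'.1
    rwa [Matrix.star_eq_conjTranspose, hconj] at h
  have hVT : Vᵀ * V = 1 := by
    have h := hV'.1
    rwa [Matrix.star_eq_conjTranspose, hconj] at h
  have hVT' : V * Vᵀ = 1 := by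
    have h := hV'.2
    rwa [Matrix.star_eq_conjTranspose, hconj] at h
  set J : Matrix (Fin m) (Fin n) ℝ := Jmat m n with hJ
  set W : Matrix (Fin m) (Fin n) ℝ := U * J * Vᵀ with hWdef
  set G : Matrix (Fin m) (Fin n) ℝ := gradF X with hG
  set E : Matrix (Fin m) (Fin n) ℝ := Gbar - G with hE
  set t : ℝ := ∑ j, dval S j with ht
  set c : Fin n → ℝ := fun j : Fin n => if (j : ℕ) < m then (1 : ℝ) else 0 with hc
  -- (F1)
  have hWW : Wᵀ * W = V * Matrix.diagonal c * Vᵀ := by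
    rw [hWdef]
    have h1 : (U * J * Vᵀ)ᵀ * (U * J * Vᵀ) = V * (Jᵀ * (Uᵀ * U) * J) * Vᵀ := by
      simp only [Matrix.transpose_mul, Matrix.transpose_transpose, Matrix.mul_assoc]
    rw [h1, hUT, Matrix.mul_one, JJ_eq]
  -- (F2)
  have hcontr : ∀ x : Fin n → ℝ, (W *ᵥ x) ⬝ᵥ (W *ᵥ x) ≤ x ⬝ᵥ x := by
    intro x
    rw [mulVec_dot_mulVec, hWW]
    apply contractive_aux V hVT' c (fun j => by
      by_cases h : (j : ℕ) < m <;> simp [hc, h]) x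
  -- (F3)
  have hGbarW : frobInner Gbar W = t := by
    rw [frobInner_eq_trace, h_svd, hWdef]
    have h1 : (U * S * Vᵀ)ᵀ * (U * J * Vᵀ) = V * (Sᵀ * (Uᵀ * U) * J) * Vᵀ := by
      simp only [Matrix.transpose_mul, Matrix.transpose_transpose, Matrix.mul_assoc]
    rw [h1, hUT, Matrix.mul_one, SJ_eq S hS_diag, Matrix.trace_mul_cycle,
      hVT, Matrix.one_mul, Matrix.trace_diagonal]
  -- (F4)
  have hdval0 : ∀ j, 0 ≤ dval S j := by
    intro j
    unfold dval
    by_cases h : (j : ℕ) < m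
    · rw [dif_pos h]; exact hS_nonneg _ _
    · rw [dif_neg h]
  have hGbarNuc : nuclearNorm Gbar = t := by
    have hDpsd : (Matrix.diagonal (dval S)).PosSemidef :=
      Matrix.posSemidef_diagonal_iff.mpr hdval0
    have hRpsd : (V * Matrix.diagonal (dval S) * Vᵀ).PosSemidef := by
      have h := hDpsd.mul_mul_conjTranspose_same V
      rwa [hconj] at h
    have hsq : (V * Matrix.diagonal (dval S) * Vᵀ) ^ 2 = Gbarᴴ * Gbar := by
      rw [pow_two, hconj, h_svd]
      have h1 : V * Matrix.diagonal (dval S) * Vᵀ * (V * Matrix.diagonal (dval S) * Vᵀ)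
          = V * (Matrix.diagonal (dval S) * (Vᵀ * V) * Matrix.diagonal (dval S)) * Vᵀ := by
        simp only [Matrix.mul_assoc]
      have h2 : (U * S * Vᵀ)ᵀ * (U * S * Vᵀ) = V * (Sᵀ * (Uᵀ * U) * S) * Vᵀ := by
        simp only [Matrix.transpose_mul, Matrix.transpose_transpose, Matrix.mul_assoc]
      rw [h1, h2, hUT, hVT, Matrix.mul_one, Matrix.mul_one, Matrix.diagonal_mul_diagonal,
        SS_eq S hS_diag]
    have hsqrt : V * Matrix.diagonal (dval S) * Vᵀ
        = posSemidefSqrt (Matrix.posSemidef_conjTranspose_mul_self Gbar) :=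
      posSemidefSqrt_eq_of_sq_eq hRpsd _ hsq
    rw [nuclearNorm, ← hsqrt, Matrix.trace_mul_cycle, hVT,
      Matrix.one_mul, Matrix.trace_diagonal]
  -- (F5)
  have hWWfrob : frobInner W W = ((min m n : ℕ) : ℝ) := by
    rw [frobInner_eq_trace, hWW, Matrix.trace_mul_cycle, hVT,
      Matrix.one_mul, Matrix.trace_diagonal]
    exact sum_dval_min
  -- (F6)
  have hEW : frobInner E W ≤ nuclearNorm E := frob_le_nuclear E W hcontr
  -- (F7)
  have htri : nuclearNorm G ≤ nuclearNorm Gbar + nuclearNorm E := by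
    have h := nuclearNorm_add_le Gbar (-E)
    rw [show Gbar + -E = G by rw [hE]; ext i j; simp] at h
    have hneg : nuclearNorm (-E) = nuclearNorm E := by
      apply nuclearNorm_eq_of_gram_eq
      simp
    linarith
  -- smoothness instantiation
  have hsm := h_smooth X (X - η • W)
  have hYX : X - η • W - X = -(η • W) := by ext i j; simp
  rw [hYX] at hsm
  have heq1 : frobInner G (-(η • W)) = -(η * frobInner G W) := by
    simp [frobInner, Finset.mul_sum, mul_comm, mul_left_comm, mul_assoc]
  have heq2 : frobInner (-(η • W)) (-(η • W)) = η ^ 2 * frobInner W W := by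
    simp [frobInner, Finset.mul_sum, pow_two]
    apply Finset.sum_congr rfl; intro i _; apply Finset.sum_congr rfl; intro j _; ring
  have hsub : frobInner G W = frobInner Gbar W - frobInner E W := by
    simp [frobInner, hE, Matrix.sub_apply, sub_mul, Finset.sum_sub_distrib]
  have hp1 : η * frobInner E W ≤ η * nuclearNorm E :=
    mul_le_mul_of_nonneg_left hEW hη.le
  have hp2 : η * nuclearNorm G ≤ η * nuclearNorm Gbar + η * nuclearNorm E := by
    have := mul_le_mul_of_nonneg_left htri hη.le
    linarith [this]
  rw [heq1, heq2, hWWfrob, hsub, hGbarW] at hsm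
  have hgoal : F (X - η • W)
      ≤ F X - η * nuclearNorm G + 2 * η * nuclearNorm E
        + L * η ^ 2 * ((min m n : ℕ) : ℝ) / 2 := by
    rw [hGbarNuc] at hp2
    nlinarith [hsm, hp1, hp2]
  convert hgoal using 3
  rfl
end

section
/- Let G ∈ ℝ^{m×n} have simple top singular value with spectral gap δ := σ₁(G) − σ₂(G) > 0, and let E ∈ ℝ^{m×n} satisfy ‖E‖_op < δ/4. Then, with u₁, v₁ the top left/right singular vectors of G, |σ₁(G + E) − σ₁(G) − u₁ᵀ E v₁| ≤ 4·‖E‖_op²/δ. -/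
open Matrix
open scoped Matrix.Norms.L2Operator

section SigmaHelpers

private lemma euclid_sum_sq {k : ℕ} (x : EuclideanSpace ℝ (Fin k)) :
    ∑ i, x i ^ 2 = ‖x‖ ^ 2 := by
  rw [EuclideanSpace.norm_eq, Real.sq_sqrt (by positivity)]
  exact Finset.sum_congr rfl fun i _ => by rw [Real.norm_eq_abs, sq_abs]

private lemma euclid_norm_one {k : ℕ} (x : EuclideanSpace ℝ (Fin k))
    (h : ∑ i, x i ^ 2 = 1) : ‖x‖ = 1 := by
  have := euclid_sum_sq x
  nlinarith [norm_nonneg x]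

private lemma euclid_inner_eq {k : ℕ} (x y : EuclideanSpace ℝ (Fin k)) :
    inner (𝕜 := ℝ) x y = ∑ i, x i * y i := by
  simp [PiLp.inner_apply, RCLike.inner_apply, conj_trivial, mul_comm]

private lemma bilin_eq_inner {m n : ℕ} (M : Matrix (Fin m) (Fin n) ℝ)
    (x : EuclideanSpace ℝ (Fin m)) (y : EuclideanSpace ℝ (Fin n)) :
    ∑ i, ∑ j, x i * M i j * y j
      = inner (𝕜 := ℝ) x ((WithLp.equiv 2 (Fin m → ℝ)).symm
          (M *ᵥ (WithLp.equiv 2 (Fin n → ℝ) y))) := by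
  simp only [PiLp.inner_apply, RCLike.inner_apply, conj_trivial,
    WithLp.equiv_symm_apply, PiLp.toLp_apply, WithLp.equiv_apply, Matrix.mulVec, dotProduct]
  rw [Finset.sum_congr rfl (fun i _ => Finset.sum_mul _ _ _)]
  apply Finset.sum_congr rfl; intro i _
  apply Finset.sum_congr rfl; intro j _
  ring

private lemma abs_bilin_le {m n : ℕ} (M : Matrix (Fin m) (Fin n) ℝ)
    (x : EuclideanSpace ℝ (Fin m)) (y : EuclideanSpace ℝ (Fin n)) :
    |∑ i, ∑ j, x i * M i j * y j| ≤ ‖M‖ * ‖x‖ * ‖y‖ := by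
  rw [bilin_eq_inner]
  calc |inner (𝕜 := ℝ) x _| ≤ ‖x‖ * ‖(WithLp.equiv 2 (Fin m → ℝ)).symm
          (M *ᵥ (WithLp.equiv 2 (Fin n → ℝ) y))‖ := abs_real_inner_le_norm _ _
    _ ≤ ‖x‖ * (‖M‖ * ‖y‖) := by
        refine mul_le_mul_of_nonneg_left ?_ (norm_nonneg _)
        exact Matrix.l2_opNorm_mulVec M y
    _ = ‖M‖ * ‖x‖ * ‖y‖ := by ring

private lemma matrix_exists_max {m n : ℕ} (hn : 0 < n)
    (M : Matrix (Fin m) (Fin n) ℝ) :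
    ∃ v : EuclideanSpace ℝ (Fin n), ‖v‖ = 1 ∧
      ‖(WithLp.equiv 2 (Fin m → ℝ)).symm (M *ᵥ (WithLp.equiv 2 (Fin n → ℝ) v))‖ = ‖M‖ := by
  haveI : Nonempty (Fin n) := ⟨⟨0, hn⟩⟩
  set f := (Matrix.toEuclideanLin (𝕜 := ℝ) (m := Fin m) (n := Fin n)).trans
      LinearMap.toContinuousLinearMap M with hf
  have hnorm : ‖M‖ = ‖f‖ := Matrix.l2_opNorm_def M
  have happ : ∀ v : EuclideanSpace ℝ (Fin n),
      f v = (WithLp.equiv 2 (Fin m → ℝ)).symm (M *ᵥ (WithLp.equiv 2 (Fin n → ℝ) v)) := by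
    intro v; rfl
  obtain ⟨v, hv, hmax⟩ := (isCompact_sphere (0 : EuclideanSpace ℝ (Fin n)) 1).exists_isMaxOn
      (NormedSpace.sphere_nonempty.mpr zero_le_one)
      ((continuous_norm.comp f.continuous).continuousOn)
  have hv1 : ‖v‖ = 1 := by simpa using mem_sphere_zero_iff_norm.mp hv
  refine ⟨v, hv1, ?_⟩
  rw [← happ, hnorm]
  refine le_antisymm (by simpa [hv1] using f.le_opNorm v) ?_
  refine f.opNorm_le_bound (norm_nonneg _) fun x => ?_
  rcases eq_or_ne x 0 with rfl | hx
  · simp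
  · have hxn : ‖x‖ ≠ 0 := norm_ne_zero_iff.mpr hx
    have hxs : (‖x‖⁻¹ • x) ∈ Metric.sphere (0 : EuclideanSpace ℝ (Fin n)) 1 := by
      simp [norm_smul, inv_mul_cancel₀ hxn, abs_of_nonneg (inv_nonneg.mpr (norm_nonneg x))]
    have h2 : ‖f (‖x‖⁻¹ • x)‖ ≤ ‖f v‖ := hmax hxs
    rw [_root_.map_smul, norm_smul, norm_inv, norm_norm] at h2
    calc ‖f x‖ = ‖x‖ * (‖x‖⁻¹ * ‖f x‖) := by field_simp
      _ ≤ ‖x‖ * ‖f v‖ := mul_le_mul_of_nonneg_left h2 (norm_nonneg x)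
      _ = ‖f v‖ * ‖x‖ := mul_comm _ _

private lemma ortho_spec {N : ℕ} (U : Matrix (Fin N) (Fin N) ℝ)
    (hU : U ∈ Matrix.orthogonalGroup (Fin N) ℝ) :
    (∀ k k', ∑ i, U i k * U i k' = if k = k' then 1 else 0) ∧
    (∀ i i', ∑ k, U i k * U i' k = if i = i' then 1 else 0) := by
  have h1 : star U * U = 1 := (Unitary.mem_iff.mp hU).1
  have h2 : U * star U = 1 := (Unitary.mem_iff.mp hU).2
  constructor
  · intro k k'
    have := congrFun (congrFun h1 k) k'
    simpa [Matrix.mul_apply, Matrix.one_apply, Matrix.star_apply] using this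
  · intro i i'
    have := congrFun (congrFun h2 i) i'
    simpa [Matrix.mul_apply, Matrix.one_apply, Matrix.star_apply] using this

private lemma sum_sq_rot {N : ℕ} (U : Matrix (Fin N) (Fin N) ℝ)
    (hrow : ∀ i i', ∑ k, U i k * U i' k = if i = i' then 1 else 0)
    (x : Fin N → ℝ) :
    ∑ k, (∑ i, U i k * x i) ^ 2 = ∑ i, x i ^ 2 := by
  have e1 : ∀ k : Fin N, (∑ i, U i k * x i) ^ 2
      = ∑ i, ∑ i', (U i k * x i) * (U i' k * x i') := by
    intro k; rw [pow_two, Finset.sum_mul_sum]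
  calc ∑ k, (∑ i, U i k * x i) ^ 2
      = ∑ k, ∑ i, ∑ i', (U i k * x i) * (U i' k * x i') :=
        Finset.sum_congr rfl fun k _ => e1 k
    _ = ∑ i, ∑ i', (x i * x i') * ∑ k, U i k * U i' k := by
        rw [Finset.sum_comm]
        refine Finset.sum_congr rfl fun i _ => ?_
        rw [Finset.sum_comm]
        refine Finset.sum_congr rfl fun i' _ => ?_
        rw [Finset.mul_sum]
        exact Finset.sum_congr rfl fun k _ => by ring
    _ = ∑ i, x i ^ 2 := by
        refine Finset.sum_congr rfl fun i _ => ?_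
        rw [Finset.sum_congr rfl fun i' (_ : i' ∈ Finset.univ) => by rw [hrow i i']]
        simp [Finset.sum_ite_eq', pow_two]

private lemma sum_extend {m N : ℕ} (hmN : m ≤ N) (g : Fin m → ℝ) :
    ∑ t ∈ Finset.range N, (if h : t < m then g ⟨t, h⟩ else 0) = ∑ k, g k := by
  have h0 : ∑ t ∈ Finset.range m, (if h : t < m then g ⟨t, h⟩ else 0)
      = ∑ t ∈ Finset.range N, (if h : t < m then g ⟨t, h⟩ else 0) :=
    Finset.sum_subset (Finset.range_subset_range.mpr hmN)
      (fun t _ ht => dif_neg (by simpa using ht))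
  rw [← h0, ← Fin.sum_univ_eq_sum_range (fun t => if h : t < m then g ⟨t, h⟩ else 0) m]
  exact Finset.sum_congr rfl fun k _ => by simp

private lemma diag_bound {N : ℕ} (hN : 0 < N) (s : ℕ → ℝ) (hs_anti : Antitone s)
    (hs_nonneg : ∀ k, 0 ≤ s k)
    (P Q : ℕ → ℝ) (hP : ∑ t ∈ Finset.range N, P t ^ 2 = 1)
    (hQ : ∑ t ∈ Finset.range N, Q t ^ 2 = 1) :
    ∑ t ∈ Finset.range N, s t * P t * Q t
      ≤ s 0 * P 0 * Q 0 + s 1 * (1 - (P 0 ^ 2 + Q 0 ^ 2) / 2) := by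
  have hsplit : ∀ (f : ℕ → ℝ), ∑ t ∈ Finset.range N, f t
      = f 0 + ∑ t ∈ Finset.Ico 1 N, f t := by
    intro f
    rw [Finset.range_eq_Ico, Finset.sum_eq_sum_Ico_succ_bot hN]
  rw [hsplit] at hP hQ ⊢
  have tail : ∑ t ∈ Finset.Ico 1 N, s t * P t * Q t
      ≤ ∑ t ∈ Finset.Ico 1 N, s 1 * ((P t ^ 2 + Q t ^ 2) / 2) := by
    refine Finset.sum_le_sum fun t ht => ?_
    have h1t : (1 : ℕ) ≤ t := (Finset.mem_Ico.mp ht).1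
    have hs1 := hs_anti h1t
    have hs0 := hs_nonneg t
    nlinarith [sq_nonneg (P t + Q t), sq_nonneg (P t - Q t)]
  rw [← Finset.mul_sum] at tail
  have hsum : ∑ t ∈ Finset.Ico 1 N, (P t ^ 2 + Q t ^ 2) / 2
      = ((1 - P 0 ^ 2) + (1 - Q 0 ^ 2)) / 2 := by
    rw [← Finset.sum_div, Finset.sum_add_distrib]
    linarith
  rw [hsum] at tail
  have hring : s 1 * ((1 - P 0 ^ 2 + (1 - Q 0 ^ 2)) / 2)
      = s 1 * (1 - (P 0 ^ 2 + Q 0 ^ 2) / 2) := by ring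
  linarith [tail, hring]

private lemma smul_diag {m n : ℕ} (s : ℕ → ℝ) (q : Fin n → ℝ) (k : Fin m) :
    ((Matrix.of fun (i : Fin m) (j : Fin n) =>
        if (i : ℕ) = (j : ℕ) then s i else 0) *ᵥ q) k
      = if h : (k : ℕ) < n then s k * q ⟨k, h⟩ else 0 := by
  simp only [Matrix.mulVec, dotProduct, Matrix.of_apply]
  by_cases h : (k : ℕ) < n
  · rw [dif_pos h]
    rw [Finset.sum_eq_single (⟨(k : ℕ), h⟩ : Fin n)]
    · simp
    · intro j _ hj
      rw [if_neg, zero_mul]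
      intro hkj
      exact hj (Fin.ext hkj.symm)
    · intro hmem; exact absurd (Finset.mem_univ _) hmem
  · rw [dif_neg h]
    refine Finset.sum_eq_zero fun j _ => ?_
    rw [if_neg, zero_mul]
    intro hkj
    exact h (hkj ▸ j.isLt)

private lemma svd_bilin {m n : ℕ} (U : Matrix (Fin m) (Fin m) ℝ)
    (V : Matrix (Fin n) (Fin n) ℝ)
    (s : ℕ → ℝ) (x : Fin m → ℝ) (y : Fin n → ℝ) :
    ∑ i, ∑ j, x i * (U * (Matrix.of fun (i : Fin m) (j : Fin n) =>
        if (i : ℕ) = (j : ℕ) then s i else 0) * Vᵀ) i j * y j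
      = ∑ k : Fin m, s k * (∑ i, U i k * x i) *
          (if h : (k : ℕ) < n then ∑ j, V j ⟨(k : ℕ), h⟩ * y j else 0) := by
  set S : Matrix (Fin m) (Fin n) ℝ := Matrix.of fun (i : Fin m) (j : Fin n) =>
      if (i : ℕ) = (j : ℕ) then s i else 0 with hS
  calc ∑ i, ∑ j, x i * (U * S * Vᵀ) i j * y j
      = x ⬝ᵥ ((U * S * Vᵀ) *ᵥ y) := by
        simp only [dotProduct, Matrix.mulVec, Finset.mul_sum]
        exact Finset.sum_congr rfl fun i _ => Finset.sum_congr rfl fun j _ => by ring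
    _ = (x ᵥ* U) ⬝ᵥ (S *ᵥ (Vᵀ *ᵥ y)) := by
        rw [← Matrix.mulVec_mulVec, ← Matrix.mulVec_mulVec, dotProduct_mulVec]
    _ = ∑ k : Fin m, s k * (∑ i, U i k * x i) *
          (if h : (k : ℕ) < n then ∑ j, V j ⟨(k : ℕ), h⟩ * y j else 0) := by
        refine Finset.sum_congr rfl fun k _ => ?_
        rw [smul_diag]
        have hp : (x ᵥ* U) k = ∑ i, U i k * x i := by
          simp only [Matrix.vecMul, dotProduct]
          exact Finset.sum_congr rfl fun i _ => mul_comm _ _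
        have hq : ∀ (h : (k : ℕ) < n),
            (Vᵀ *ᵥ y) (⟨(k : ℕ), h⟩ : Fin n) = ∑ j, V j ⟨(k : ℕ), h⟩ * y j := by
          intro h
          simp only [Matrix.mulVec, dotProduct, Matrix.transpose_apply]
        by_cases h : (k : ℕ) < n
        · rw [dif_pos h, dif_pos h, hp, hq h]; ring
        · rw [dif_neg h, dif_neg h, mul_zero, mul_zero]

private lemma final_arith (s0 s1 F00 σ ε a b d1 d2 : ℝ) (hδ : 0 < s0 - s1)
    (hs1 : 0 ≤ s1) (hε : 0 ≤ ε)
    (ha : |a| ≤ 1) (hb : |b| ≤ 1) (hab : 0 ≤ a + b)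
    (hd1 : 0 ≤ d1) (hd2 : 0 ≤ d2) (hd1s : d1 ^ 2 = 2 - 2 * a) (hd2s : d2 ^ 2 = 2 - 2 * b)
    (hup : σ ≤ s0 * a * b + s1 * (1 - (a ^ 2 + b ^ 2) / 2) + F00 + ε * d1 + ε * d2)
    (hlo : s0 + F00 ≤ σ) :
    |σ - s0 - F00| ≤ 4 * ε ^ 2 / (s0 - s1) := by
  have ha1 : a ≤ 1 := (abs_le.mp ha).2
  have hb1 : b ≤ 1 := (abs_le.mp hb).2
  have ha1' : -1 ≤ a := (abs_le.mp ha).1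
  have hb1' : -1 ≤ b := (abs_le.mp hb).1
  rw [abs_le]
  constructor
  · have h4 : 0 ≤ 4 * ε ^ 2 / (s0 - s1) := by positivity
    linarith
  · rw [le_div_iff₀ hδ]
    have hα : 0 ≤ (a + b) / 2 := by linarith
    have hα1 : (a + b) / 2 ≤ 1 := by linarith
    have hD : (d1 + d2) ^ 2 ≤ 8 * (1 - (a + b) / 2) := by
      nlinarith [sq_nonneg (d1 - d2)]
    have hkey : ε * (d1 + d2) * (s0 - s1) ≤ (s0 - s1) ^ 2 * (1 - (a + b) / 2) + 2 * ε ^ 2 := by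
      nlinarith [sq_nonneg ((s0 - s1) * (d1 + d2) - 4 * ε), mul_nonneg hε (add_nonneg hd1 hd2),
        mul_nonneg (mul_nonneg hε (add_nonneg hd1 hd2)) hδ.le]
    have hdiag : s0 * a * b + s1 * (1 - (a ^ 2 + b ^ 2) / 2) - s0
        ≤ -(s0 - s1) * (1 - (a + b) / 2) := by
      nlinarith [mul_nonneg (by linarith : (0:ℝ) ≤ s0 + s1) (sq_nonneg (a - b)),
        mul_nonneg hδ.le (mul_nonneg hα (sub_nonneg.mpr hα1))]
    nlinarith [hkey, hdiag, mul_pos hδ hδ, sq_nonneg ε]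

end SigmaHelpers

/-- First-order expansion of the top singular value with explicit quadratic remainder.
The matrix `G` is given through a full SVD `G = U·S·Vᵀ` with orthogonal `U, V` and
rectangular diagonal `S` holding the singular values `s 0 ≥ s 1 ≥ ⋯ ≥ 0`; the norm `‖·‖`
is the `ℓ²`-operator norm, so `‖G + E‖ = σ₁(G + E)` and `σ₁(G) = s 0`, `σ₂(G) = s 1`.
If the spectral gap `δ = s 0 − s 1` is positive and `‖E‖ < δ/4`, then with the top singular
vectors `u₁ = U·e₀`, `v₁ = V·e₀`,
`|σ₁(G + E) − σ₁(G) − u₁ᵀ E v₁| ≤ 4‖E‖²/δ`. -/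
theorem sigma1_first_order_expansion {m n : ℕ} (hm : 0 < m) (hn : 0 < n)
    (G E : Matrix (Fin m) (Fin n) ℝ)
    (U : Matrix (Fin m) (Fin m) ℝ) (V : Matrix (Fin n) (Fin n) ℝ)
    (s : ℕ → ℝ)
    (hU : U ∈ Matrix.orthogonalGroup (Fin m) ℝ)
    (hV : V ∈ Matrix.orthogonalGroup (Fin n) ℝ)
    (hs_anti : Antitone s) (hs_nonneg : ∀ k, 0 ≤ s k)
    (hs_zero : ∀ k, min m n ≤ k → s k = 0)
    (h_svd : G = U * (Matrix.of fun (i : Fin m) (j : Fin n) =>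
        if (i : ℕ) = (j : ℕ) then s i else 0) * Vᵀ)
    (h_gap : 0 < s 0 - s 1)
    (hE : ‖E‖ < (s 0 - s 1) / 4) :
    |‖G + E‖ - s 0 -
        ∑ i, ∑ j, U i ⟨0, hm⟩ * E i j * V j ⟨0, hn⟩|
      ≤ 4 * ‖E‖ ^ 2 / (s 0 - s 1) := by
  classical
  obtain ⟨hUcol, hUrow⟩ := ortho_spec U hU
  obtain ⟨hVcol, hVrow⟩ := ortho_spec V hV
  set ε := ‖E‖ with hεdef
  have hε0 : (0:ℝ) ≤ ε := norm_nonneg E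
  have hs1 : (0:ℝ) ≤ s 1 := hs_nonneg 1
  set F00 := ∑ i, ∑ j, U i ⟨0, hm⟩ * E i j * V j ⟨0, hn⟩ with hF00def
  -- top singular vectors
  set u₁ : EuclideanSpace ℝ (Fin m) :=
    (WithLp.equiv 2 (Fin m → ℝ)).symm (fun i => U i ⟨0, hm⟩) with hu₁def
  set v₁ : EuclideanSpace ℝ (Fin n) :=
    (WithLp.equiv 2 (Fin n → ℝ)).symm (fun j => V j ⟨0, hn⟩) with hv₁def
  have hu₁app : ∀ i, u₁ i = U i ⟨0, hm⟩ := fun i => rfl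
  have hv₁app : ∀ j, v₁ j = V j ⟨0, hn⟩ := fun j => rfl
  have hu₁norm : ‖u₁‖ = 1 := by
    refine euclid_norm_one _ ?_
    have h1 := hUcol ⟨0, hm⟩ ⟨0, hm⟩
    rw [if_pos rfl] at h1
    calc ∑ i, u₁ i ^ 2 = ∑ i, U i ⟨0, hm⟩ * U i ⟨0, hm⟩ :=
          Finset.sum_congr rfl fun i _ => by rw [hu₁app]; ring
      _ = 1 := h1
  have hv₁norm : ‖v₁‖ = 1 := by
    refine euclid_norm_one _ ?_
    have h1 := hVcol ⟨0, hn⟩ ⟨0, hn⟩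
    rw [if_pos rfl] at h1
    calc ∑ j, v₁ j ^ 2 = ∑ j, V j ⟨0, hn⟩ * V j ⟨0, hn⟩ :=
          Finset.sum_congr rfl fun j _ => by rw [hv₁app]; ring
      _ = 1 := h1
  have hF00bilin : F00 = ∑ i, ∑ j, u₁ i * E i j * v₁ j := rfl
  have hF00abs : |F00| ≤ ε := by
    rw [hF00bilin]
    have h := abs_bilin_le E u₁ v₁
    rwa [hu₁norm, hv₁norm, mul_one, mul_one] at h
  -- bilinear form of G
  have hGbilin : ∀ (x : EuclideanSpace ℝ (Fin m)) (y : EuclideanSpace ℝ (Fin n)),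
      ∑ i, ∑ j, x i * G i j * y j
        = ∑ k : Fin m, s k * (∑ i, U i k * x i) *
            (if h : (k : ℕ) < n then ∑ j, V j ⟨(k : ℕ), h⟩ * y j else 0) := by
    intro x y
    rw [h_svd]
    exact svd_bilin U V s (fun i => x i) (fun j => y j)
  have hG00 : ∑ i, ∑ j, u₁ i * G i j * v₁ j = s 0 := by
    rw [hGbilin u₁ v₁]
    rw [Finset.sum_eq_single (⟨0, hm⟩ : Fin m)]
    · have hp : (∑ i, U i ⟨0, hm⟩ * u₁ i) = 1 := by
        rw [Finset.sum_congr rfl fun i _ => by rw [hu₁app i]]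
        simpa using hUcol ⟨0, hm⟩ ⟨0, hm⟩
      rw [dif_pos hn]
      have hq : (∑ j, V j ⟨(0:ℕ), hn⟩ * v₁ j) = 1 := by
        rw [Finset.sum_congr rfl fun j _ => by rw [hv₁app j]]
        simpa using hVcol ⟨0, hn⟩ ⟨0, hn⟩
      rw [hp, hq]
      simp
    · intro k _ hk
      have hp : (∑ i, U i k * u₁ i) = 0 := by
        rw [Finset.sum_congr rfl fun i _ => by rw [hu₁app i]]
        simpa [hk] using hUcol k ⟨0, hm⟩
      rw [hp, mul_zero, zero_mul]
    · intro hmem; exact absurd (Finset.mem_univ _) hmem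
  -- lower bound
  have hbilinadd : ∀ (x : EuclideanSpace ℝ (Fin m)) (y : EuclideanSpace ℝ (Fin n)),
      ∑ i, ∑ j, x i * (G + E) i j * y j
        = (∑ i, ∑ j, x i * G i j * y j) + (∑ i, ∑ j, x i * E i j * y j) := by
    intro x y
    rw [← Finset.sum_add_distrib]
    refine Finset.sum_congr rfl fun i _ => ?_
    rw [← Finset.sum_add_distrib]
    refine Finset.sum_congr rfl fun j _ => ?_
    rw [Matrix.add_apply]; ring
  have hlow : s 0 + F00 ≤ ‖G + E‖ := by
    have hsplit : ∑ i, ∑ j, u₁ i * (G + E) i j * v₁ j = s 0 + F00 := by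
      rw [hbilinadd u₁ v₁, hG00, ← hF00bilin]
    have habs := abs_bilin_le (G + E) u₁ v₁
    rw [hu₁norm, hv₁norm, mul_one, mul_one] at habs
    calc s 0 + F00 = ∑ i, ∑ j, u₁ i * (G + E) i j * v₁ j := hsplit.symm
      _ ≤ |∑ i, ∑ j, u₁ i * (G + E) i j * v₁ j| := le_abs_self _
      _ ≤ ‖G + E‖ := habs
  have hσpos : 0 < ‖G + E‖ := by
    have h1 := neg_abs_le F00
    linarith [hF00abs, h_gap, hE, hs1, hlow]
  -- maximizing pair
  obtain ⟨v₀, hv₀norm, hv₀max⟩ := matrix_exists_max hn (G + E)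
  set w : EuclideanSpace ℝ (Fin m) :=
    (WithLp.equiv 2 (Fin m → ℝ)).symm ((G + E) *ᵥ (WithLp.equiv 2 (Fin n → ℝ) v₀)) with hwdef
  set u₀ : EuclideanSpace ℝ (Fin m) := (‖G + E‖⁻¹ : ℝ) • w with hu₀def
  have hu₀norm : ‖u₀‖ = 1 := by
    rw [hu₀def, norm_smul, hv₀max, norm_inv, Real.norm_eq_abs, abs_of_pos hσpos]
    field_simp
  have hbilinmax : ∑ i, ∑ j, u₀ i * (G + E) i j * v₀ j = ‖G + E‖ := by
    rw [bilin_eq_inner]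
    calc inner (𝕜 := ℝ) u₀ w = ‖G + E‖⁻¹ * inner (𝕜 := ℝ) w w := by
          rw [hu₀def, real_inner_smul_left]
      _ = ‖G + E‖⁻¹ * ‖w‖ ^ 2 := by rw [real_inner_self_eq_norm_sq]
      _ = ‖G + E‖ := by rw [hv₀max]; field_simp
  have key : ∃ (u : EuclideanSpace ℝ (Fin m)) (v : EuclideanSpace ℝ (Fin n)),
      ‖u‖ = 1 ∧ ‖v‖ = 1 ∧ (∑ i, ∑ j, u i * (G + E) i j * v j = ‖G + E‖) ∧
      0 ≤ (∑ i, U i ⟨0, hm⟩ * u i) + (∑ j, V j ⟨0, hn⟩ * v j) := by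
    by_cases hsign : 0 ≤ (∑ i, U i ⟨0, hm⟩ * u₀ i) + (∑ j, V j ⟨0, hn⟩ * v₀ j)
    · exact ⟨u₀, v₀, hu₀norm, hv₀norm, hbilinmax, hsign⟩
    · refine ⟨-u₀, -v₀, by rw [norm_neg]; exact hu₀norm,
        by rw [norm_neg]; exact hv₀norm, ?_, ?_⟩
      · calc ∑ i, ∑ j, (-u₀) i * (G + E) i j * (-v₀) j
            = ∑ i, ∑ j, u₀ i * (G + E) i j * v₀ j := by
              refine Finset.sum_congr rfl fun i _ =>
                Finset.sum_congr rfl fun j _ => ?_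
              simp only [PiLp.neg_apply]
              ring
          _ = ‖G + E‖ := hbilinmax
      · have e1 : ∑ i, U i ⟨0, hm⟩ * (-u₀) i = -∑ i, U i ⟨0, hm⟩ * u₀ i := by
          rw [← Finset.sum_neg_distrib]
          exact Finset.sum_congr rfl fun i _ => by simp [PiLp.neg_apply]
        have e2 : ∑ j, V j ⟨0, hn⟩ * (-v₀) j = -∑ j, V j ⟨0, hn⟩ * v₀ j := by
          rw [← Finset.sum_neg_distrib]
          exact Finset.sum_congr rfl fun j _ => by simp [PiLp.neg_apply]
        rw [e1, e2]
        linarith [not_le.mp hsign]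
  obtain ⟨u, v, hunorm, hvnorm, hmaxx, hsign⟩ := key
  set a := ∑ i, U i ⟨0, hm⟩ * u i with hadef
  set b := ∑ j, V j ⟨0, hn⟩ * v j with hbdef
  have husum : ∑ i, (u i) ^ 2 = 1 := by rw [euclid_sum_sq, hunorm]; norm_num
  have hvsum : ∑ j, (v j) ^ 2 = 1 := by rw [euclid_sum_sq, hvnorm]; norm_num
  have hainner : inner (𝕜 := ℝ) u₁ u = a := by
    rw [euclid_inner_eq]
    exact Finset.sum_congr rfl fun i _ => by rw [hu₁app]
  have hbinner : inner (𝕜 := ℝ) v₁ v = b := by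
    rw [euclid_inner_eq]
    exact Finset.sum_congr rfl fun j _ => by rw [hv₁app]
  have haabs : |a| ≤ 1 := by
    rw [← hainner]
    have h := abs_real_inner_le_norm u₁ u
    rwa [hu₁norm, hunorm, mul_one] at h
  have hbabs : |b| ≤ 1 := by
    rw [← hbinner]
    have h := abs_real_inner_le_norm v₁ v
    rwa [hv₁norm, hvnorm, mul_one] at h
  set d1 := ‖u - u₁‖ with hd1def
  set d2 := ‖v - v₁‖ with hd2def
  have hd1sq : d1 ^ 2 = 2 - 2 * a := by
    rw [hd1def]
    calc ‖u - u₁‖ ^ 2 = ‖u‖ ^ 2 - 2 * inner (𝕜 := ℝ) u u₁ + ‖u₁‖ ^ 2 :=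
          norm_sub_sq_real u u₁
      _ = 2 - 2 * a := by
          rw [hunorm, hu₁norm, real_inner_comm, hainner]; ring
  have hd2sq : d2 ^ 2 = 2 - 2 * b := by
    rw [hd2def]
    calc ‖v - v₁‖ ^ 2 = ‖v‖ ^ 2 - 2 * inner (𝕜 := ℝ) v v₁ + ‖v₁‖ ^ 2 :=
          norm_sub_sq_real v v₁
      _ = 2 - 2 * b := by
          rw [hvnorm, hv₁norm, real_inner_comm, hbinner]; ring
  -- P/Q sums
  set N := max m n with hNdef
  have hN : 0 < N := lt_of_lt_of_le hm (le_max_left m n)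
  have hPsum : ∑ t ∈ Finset.range N,
      (if h : t < m then ∑ i, U i ⟨t, h⟩ * u i else 0) ^ 2 = 1 := by
    have e : ∀ t ∈ Finset.range N,
        (if h : t < m then ∑ i, U i ⟨t, h⟩ * u i else 0) ^ 2
          = if h : t < m then (fun k : Fin m => (∑ i, U i k * u i) ^ 2) ⟨t, h⟩ else 0 := by
      intro t _
      by_cases h : t < m
      · rw [dif_pos h, dif_pos h]
      · rw [dif_neg h, dif_neg h]; norm_num
    rw [Finset.sum_congr rfl e,
      sum_extend (le_max_left m n) (fun k : Fin m => (∑ i, U i k * u i) ^ 2),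
      sum_sq_rot U hUrow (fun i => u i)]
    exact husum
  have hQsum : ∑ t ∈ Finset.range N,
      (if h : t < n then ∑ j, V j ⟨t, h⟩ * v j else 0) ^ 2 = 1 := by
    have e : ∀ t ∈ Finset.range N,
        (if h : t < n then ∑ j, V j ⟨t, h⟩ * v j else 0) ^ 2
          = if h : t < n then (fun k : Fin n => (∑ j, V j k * v j) ^ 2) ⟨t, h⟩ else 0 := by
      intro t _
      by_cases h : t < n
      · rw [dif_pos h, dif_pos h]
      · rw [dif_neg h, dif_neg h]; norm_num
    rw [Finset.sum_congr rfl e,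
      sum_extend (le_max_right m n) (fun k : Fin n => (∑ j, V j k * v j) ^ 2),
      sum_sq_rot V hVrow (fun j => v j)]
    exact hvsum
  have hGsum : ∑ i, ∑ j, u i * G i j * v j
      ≤ s 0 * a * b + s 1 * (1 - (a ^ 2 + b ^ 2) / 2) := by
    have hd := diag_bound hN s hs_anti hs_nonneg
      (fun t => if h : t < m then ∑ i, U i ⟨t, h⟩ * u i else 0)
      (fun t => if h : t < n then ∑ j, V j ⟨t, h⟩ * v j else 0) hPsum hQsum
    have e1 : ∑ i, ∑ j, u i * G i j * v j
        = ∑ t ∈ Finset.range N, s t *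
            (if h : t < m then ∑ i, U i ⟨t, h⟩ * u i else 0) *
            (if h : t < n then ∑ j, V j ⟨t, h⟩ * v j else 0) := by
      rw [hGbilin u v]
      rw [← sum_extend (le_max_left m n) (fun k : Fin m => s (k : ℕ) * (∑ i, U i k * u i) *
          (if h : ((k : ℕ)) < n then ∑ j, V j ⟨(k : ℕ), h⟩ * v j else 0))]
      refine (Finset.sum_congr rfl fun t ht => ?_).symm
      by_cases h : t < m
      · rw [dif_pos h, dif_pos h]
      · rw [dif_neg h, dif_neg h, mul_zero, zero_mul]
    rw [e1]
    have e2 : (if h : (0:ℕ) < m then ∑ i, U i ⟨0, h⟩ * u i else 0) = a := dif_pos hm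
    have e3 : (if h : (0:ℕ) < n then ∑ j, V j ⟨0, h⟩ * v j else 0) = b := dif_pos hn
    beta_reduce at hd
    rw [e2, e3] at hd
    exact hd
  have hEsum : ∑ i, ∑ j, u i * E i j * v j ≤ F00 + ε * d1 + ε * d2 := by
    have hid : ∑ i, ∑ j, u i * E i j * v j
        = (∑ i, ∑ j, u₁ i * E i j * v₁ j)
          + ((∑ i, ∑ j, (u - u₁) i * E i j * v j)
          + (∑ i, ∑ j, u₁ i * E i j * (v - v₁) j)) := by
      rw [← Finset.sum_add_distrib, ← Finset.sum_add_distrib]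
      refine Finset.sum_congr rfl fun i _ => ?_
      rw [← Finset.sum_add_distrib, ← Finset.sum_add_distrib]
      refine Finset.sum_congr rfl fun j _ => ?_
      simp only [PiLp.sub_apply]
      ring
    have h2 := abs_bilin_le E (u - u₁) v
    rw [hvnorm, mul_one, ← hd1def] at h2
    have h3 := abs_bilin_le E u₁ (v - v₁)
    rw [hu₁norm, mul_one, ← hd2def] at h3
    have h2' := (le_abs_self _).trans h2
    have h3' := (le_abs_self _).trans h3
    rw [hid, ← hF00bilin]
    have : ‖E‖ * d1 = ε * d1 := rfl
    linarith [h2', h3']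
  have hup : ‖G + E‖ ≤ s 0 * a * b + s 1 * (1 - (a ^ 2 + b ^ 2) / 2) + F00 + ε * d1 + ε * d2 := by
    rw [← hmaxx, hbilinadd u v]
    linarith [hGsum, hEsum]
  exact final_arith (s 0) (s 1) F00 (‖G + E‖) ε a b d1 d2 h_gap hs1 hε0 haabs hbabs hsign
    (norm_nonneg _) (norm_nonneg _) hd1sq hd2sq hup hlow
end
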